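/- arXiv:1405.0535 — 8 statements merged into one kernel-verified Lean document; each statement's English description precedes it below -/
import Mathlib

section
/- There exists γ_min > 0 such that for every γ ≥ γ_min, every solution of the regularized problem (P_γ) is a solution of the linear program (P). -/
/-!
Let `x̄` be the least-norm solution of (P): the projection of the origin onto the optimal face
`F = {x feasible | cᵀx ≤ p*}`, so that `x̄ᵀ(y - x̄) ≥ 0` for `y ∈ F`. By Farkas' lemma this
variational inequality extends from `F` to the whole feasible set at the price of an exact
penalty: there is `μ ≥ 0` with `x̄ᵀ(y - x̄) + μ cᵀ(y - x̄) ≥ 0` for every feasible `y`. If `x`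
solves (P_γ) with `γ > μ`, comparing it with `x̄` gives
`γ (cᵀx - p*) ≤ ½ (|x̄|² - |x|²) ≤ μ (cᵀx - p*)`, hence `cᵀx = p*`.
Farkas' lemma, and the fact that `p*` is attained, rest on the closedness of finitely generated
cones, which follows from Carathéodory's theorem for cones.
-/

open Function Matrix Set Filter Topology

theorem exists_nonneg_sub_smul_support_ssubset {ι : Type*} [Fintype ι] {t w : ι → ℝ}
    (ht : 0 ≤ t) (hw : support w ⊆ support t) {j : ι} (hj : 0 < w j) :
    ∃ r : ℝ, 0 ≤ t - r • w ∧ support (t - r • w) ⊂ support t := by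
  classical
  obtain ⟨j₀, hj₀, hmin⟩ := (Finset.univ.filter fun i => 0 < w i).exists_min_image
    (fun i => t i / w i) ⟨j, by simpa using hj⟩
  rw [Finset.mem_filter] at hj₀
  have hr : 0 ≤ t j₀ / w j₀ := div_nonneg (ht j₀) hj₀.2.le
  refine ⟨t j₀ / w j₀, fun i => ?_, ?_⟩
  · rcases lt_or_ge 0 (w i) with hi | hi
    · have := hmin i (by simpa using hi)
      rw [le_div_iff₀ hi] at this
      simpa using this
    · simpa using (mul_nonpos_of_nonneg_of_nonpos hr hi).trans (ht i)
  · rw [ssubset_iff_of_subset]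
    · refine ⟨j₀, ?_, ?_⟩
      · exact hw (Function.mem_support.2 hj₀.2.ne')
      · simp [div_mul_cancel₀ _ hj₀.2.ne']
    · intro i hi h0
      apply hi
      have : w i = 0 := by_contra fun h => hw h h0
      simp [h0, this]

theorem exists_sum_smul_eq_zero_of_not_linearIndepOn {E ι : Type*} [AddCommGroup E] [Module ℝ E]
    [Fintype ι] {G : ι → E} {s : Set ι} (h : ¬LinearIndepOn ℝ G s) :
    ∃ w : ι → ℝ, support w ⊆ s ∧ ∑ j, w j • G j = 0 ∧ ∃ j, 0 < w j := by
  classical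
  simp only [linearIndepOn_iff'', not_forall] at h
  obtain ⟨T, w, hTs, hwT, hsum, j, hjT, hwj⟩ := h
  have hsum' : ∑ i, w i • G i = 0 := by
    rw [← hsum]
    exact (Finset.sum_subset (Finset.subset_univ T) fun i _ hi => by simp [hwT i hi]).symm
  have hsupp : support w ⊆ s := fun i hi => hTs (by_contra fun h => hi (hwT i h))
  rcases lt_or_gt_of_ne hwj with hneg | hpos
  · refine ⟨-w, by rwa [Function.support_neg], by simp [hsum'], j, by simpa using hneg⟩
  · exact ⟨w, hsupp, hsum', j, hpos⟩

theorem exists_linearIndepOn_support {E ι : Type*} [AddCommGroup E] [Module ℝ E] [Fintype ι]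
    (G : ι → E) {t : ι → ℝ} (ht : 0 ≤ t) :
    ∃ t' : ι → ℝ, 0 ≤ t' ∧ LinearIndepOn ℝ G (support t') ∧ ∑ j, t' j • G j = ∑ j, t j • G j := by
  induction hs : support t using WellFoundedLT.induction generalizing t with
  | _ s ih =>
  by_cases hli : LinearIndepOn ℝ G (support t)
  · exact ⟨t, ht, hli, rfl⟩
  obtain ⟨w, hws, hw0, j, hj⟩ := exists_sum_smul_eq_zero_of_not_linearIndepOn hli
  obtain ⟨r, hr, hss⟩ := exists_nonneg_sub_smul_support_ssubset ht hws hj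
  obtain ⟨t', ht', hli', hsum⟩ := ih _ (hs ▸ hss) hr rfl
  refine ⟨t', ht', hli', hsum.trans ?_⟩
  simp [sub_smul, Finset.sum_sub_distrib, mul_smul, ← Finset.smul_sum, hw0]

namespace PointedCone

variable {E ι : Type*} [AddCommGroup E] [Module ℝ E]

theorem mem_hull_range_iff [Fintype ι] {G : ι → E} {x : E} :
    x ∈ hull ℝ (range G) ↔ ∃ t : ι → ℝ, 0 ≤ t ∧ ∑ j, t j • G j = x := by
  rw [Submodule.mem_span_range_iff_exists_fun]
  constructor
  · rintro ⟨t, rfl⟩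
    exact ⟨fun j => t j, fun j => (t j).2, rfl⟩
  · rintro ⟨t, ht, rfl⟩
    exact ⟨fun j => ⟨t j, ht j⟩, rfl⟩

variable [TopologicalSpace E] [IsTopologicalAddGroup E] [ContinuousSMul ℝ E] [T2Space E]

theorem isClosed_hull_range_of_linearIndependent [Finite ι] {G : ι → E}
    (hG : LinearIndependent ℝ G) : IsClosed (hull ℝ (range G) : Set E) := by
  have := Fintype.ofFinite ι
  have himage : (hull ℝ (range G) : Set E) = Fintype.linearCombination ℝ G '' Ici 0 := by
    ext x
    simp [mem_hull_range_iff, Fintype.linearCombination_apply]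
  have hinj := linearIndependent_iff_injective_fintypeLinearCombination.1 hG
  rw [himage]
  exact (LinearMap.isClosedEmbedding_of_injective (LinearMap.ker_eq_bot.2 hinj)).isClosedMap _
    isClosed_Ici

theorem isClosed_hull_range [Finite ι] (G : ι → E) : IsClosed (hull ℝ (range G) : Set E) := by
  have := Fintype.ofFinite ι
  have hunion : (hull ℝ (range G) : Set E) =
      ⋃ s ∈ {s : Set ι | LinearIndepOn ℝ G s}, hull ℝ (G '' s) := by
    refine subset_antisymm (fun x hx => ?_) (iUnion₂_subset fun s _ => ?_)
    · obtain ⟨t, ht, rfl⟩ := mem_hull_range_iff.1 hx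
      obtain ⟨t', ht', hli, hsum⟩ := exists_linearIndepOn_support G ht
      refine mem_biUnion hli (hsum ▸ Submodule.sum_mem _ fun j _ => ?_)
      by_cases hj : t' j = 0
      · simp [hj]
      · exact smul_mem _ (ht' j) (subset_hull (mem_image_of_mem G hj))
    · exact Submodule.span_mono (image_subset_range G s)
  rw [hunion]
  refine (toFinite _).isClosed_biUnion fun s hs => ?_
  rw [image_eq_range]
  exact isClosed_hull_range_of_linearIndependent hs

theorem mem_hull_range_of_forall_nonneg [LocallyConvexSpace ℝ E] [Finite ι] {G : ι → E} {v : E}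
    (h : ∀ f : StrongDual ℝ E, (∀ j, 0 ≤ f (G j)) → 0 ≤ f v) : v ∈ hull ℝ (range G) := by
  by_contra hv
  obtain ⟨f, hf, hfv⟩ :=
    ProperCone.hyperplane_separation_point ⟨hull ℝ (range G), isClosed_hull_range G⟩ hv
  exact hfv.not_ge (h f fun j => hf _ (subset_hull (mem_range_self j)))

theorem isClosed_image_Ici_zero [Fintype ι] (L : (ι → ℝ) →ₗ[ℝ] E) : IsClosed (L '' Ici 0) := by
  classical
  have hL : ∀ t, ∑ j, t j • L (Pi.single j 1) = L t := fun t => by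
    simp only [← LinearMap.map_smul, ← map_sum]
    congr 1 with i
    simp [Finset.sum_apply, Pi.single_apply]
  have : L '' Ici 0 = hull ℝ (range fun j => L (Pi.single j 1)) := by
    ext x
    simp [mem_hull_range_iff, hL]
  rw [this]
  exact isClosed_hull_range _

end PointedCone

theorem mem_hull_range_of_forall_dotProduct_nonneg {α ι : Type*} [Finite α] [Fintype ι]
    {G : α → ι → ℝ} {v : ι → ℝ} (h : ∀ w, (∀ j, 0 ≤ G j ⬝ᵥ w) → 0 ≤ v ⬝ᵥ w) :
    v ∈ PointedCone.hull ℝ (range G) := by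
  classical
  refine PointedCone.mem_hull_range_of_forall_nonneg fun f hf => ?_
  have hfw : ∀ x, f x = (dotProductEquiv ℝ ι).symm f.toLinearMap ⬝ᵥ x := fun x => by
    conv_lhs => rw [← f.coe_coe, ← (dotProductEquiv ℝ ι).apply_symm_apply f.toLinearMap]
    rfl
  simp only [hfw, dotProduct_comm _ (G _)] at hf ⊢
  rw [dotProduct_comm]
  exact h _ hf

theorem exists_nonneg_forall_dotProduct_add_mul_nonneg {α ι : Type*} [Fintype α] [Fintype ι]
    (H : α → ι → ℝ) (u c : ι → ℝ) (h : ∀ w, (∀ j, 0 ≤ H j ⬝ᵥ w) → c ⬝ᵥ w ≤ 0 → 0 ≤ u ⬝ᵥ w) :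
    ∃ μ ≥ 0, ∀ w, (∀ j, 0 ≤ H j ⬝ᵥ w) → 0 ≤ u ⬝ᵥ w + μ * (c ⬝ᵥ w) := by
  have hu : u ∈ PointedCone.hull ℝ (range fun o : Option α => o.elim (-c) H) :=
    mem_hull_range_of_forall_dotProduct_nonneg fun w hw =>
      h w (fun j => hw (some j)) (by simpa using hw none)
  obtain ⟨t, ht, rfl⟩ := PointedCone.mem_hull_range_iff.1 hu
  refine ⟨t none, ht none, fun w hw => ?_⟩
  simp only [Fintype.sum_option, Option.elim_none, Option.elim_some, add_dotProduct,
    sum_dotProduct, smul_dotProduct, smul_eq_mul, neg_dotProduct, mul_neg, neg_add_cancel_comm]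
  exact Finset.sum_nonneg fun j _ => mul_nonneg (ht _) (hw j)

theorem exists_forall_dotProduct_sub_nonneg {ι : Type*} [Fintype ι] {K : Set (ι → ℝ)}
    (hne : K.Nonempty) (hK : IsClosed K) (hconv : Convex ℝ K) :
    ∃ x ∈ K, ∀ y ∈ K, 0 ≤ x ⬝ᵥ (y - x) := by
  set K' : Set (EuclideanSpace ℝ ι) := WithLp.ofLp ⁻¹' K
  have hK'conv : Convex ℝ K' := hconv.linear_preimage (WithLp.linearEquiv 2 ℝ (ι → ℝ)).toLinearMap
  obtain ⟨x, hx⟩ := hne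
  obtain ⟨v, hv, hmin⟩ := exists_norm_eq_iInf_of_complete_convex (K := K') ⟨WithLp.toLp 2 x, hx⟩
    (hK.preimage (PiLp.continuous_ofLp 2 _)).isComplete hK'conv 0
  -- `v` is the point of `K'` nearest to the origin
  refine ⟨v.ofLp, hv, fun y hy => ?_⟩
  have := (norm_eq_iInf_iff_real_inner_le_zero hK'conv hv).1 hmin (WithLp.toLp 2 y) hy
  simpa [EuclideanSpace.inner_eq_star_dotProduct, dotProduct_comm] using this

section LinearProgram

variable {ι κ : Type*} [Fintype ι]

def feasibleSet (A : Matrix κ ι ℝ) (b : κ → ℝ) : Set (ι → ℝ) := {x | A *ᵥ x = b ∧ 0 ≤ x}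

variable {A : Matrix κ ι ℝ} {b : κ → ℝ}

theorem isClosed_feasibleSet : IsClosed (feasibleSet A b) :=
  (isClosed_eq (continuous_const.matrix_mulVec continuous_id) continuous_const).inter isClosed_Ici

theorem convex_feasibleSet : Convex ℝ (feasibleSet A b) :=
  ((convex_singleton b).linear_preimage A.mulVecLin).inter (convex_Ici 0)

theorem exists_isMinOn_dotProduct_feasibleSet (c : ι → ℝ) (hne : (feasibleSet A b).Nonempty)
    (hbdd : BddBelow ((c ⬝ᵥ ·) '' feasibleSet A b)) :
    ∃ x ∈ feasibleSet A b, IsMinOn (c ⬝ᵥ ·) (feasibleSet A b) x := by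
  let L : (ι → ℝ) →ₗ[ℝ] (κ → ℝ) × ℝ := A.mulVecLin.prod (dotProductBilin ℝ ℝ c)
  have hclosed : IsClosed ((c ⬝ᵥ ·) '' feasibleSet A b) := by
    have : (c ⬝ᵥ ·) '' feasibleSet A b = (fun s => (b, s)) ⁻¹' (L '' Ici 0) := by
      ext s
      simp [feasibleSet, L, Prod.ext_iff, and_comm, and_left_comm]
    rw [this]
    exact (PointedCone.isClosed_image_Ici_zero L).preimage (by fun_prop)
  obtain ⟨x, hx, hxmin⟩ := hclosed.csInf_mem (hne.image _) hbdd
  exact ⟨x, hx, fun y hy => hxmin ▸ csInf_le hbdd (mem_image_of_mem _ hy)⟩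

theorem eventually_add_smul_mem_feasibleSet {x w : ι → ℝ} (hx : x ∈ feasibleSet A b)
    (hAw : A *ᵥ w = 0) (hw : ∀ i, x i = 0 → 0 ≤ w i) :
    ∀ᶠ ε in 𝓝[>] (0 : ℝ), x + ε • w ∈ feasibleSet A b := by
  have hpos : ∀ i, ∀ᶠ ε in 𝓝[>] (0 : ℝ), 0 ≤ x i + ε * w i := by
    intro i
    have hxi : 0 ≤ x i := hx.2 i
    rcases hxi.eq_or_lt with h0 | hlt
    · filter_upwards [self_mem_nhdsWithin] with ε hε
      rw [← h0, zero_add]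
      exact mul_nonneg (le_of_lt hε) (hw i h0.symm)
    · have : Tendsto (fun ε => x i + ε * w i) (𝓝 0) (𝓝 (x i)) :=
        (continuous_const.add (continuous_id.mul continuous_const)).tendsto' 0 (x i) (by simp)
      exact nhdsWithin_le_nhds ((this.eventually (lt_mem_nhds hlt)).mono fun _ => le_of_lt)
  filter_upwards [eventually_all.2 hpos] with ε hε
  exact ⟨by simp [mulVec_add, mulVec_smul, hAw, hx.1], hε⟩

theorem exists_forall_feasibleSet_dotProduct_add_mul_nonneg [Fintype κ] (c u : ι → ℝ) {x : ι → ℝ}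
    (hx : x ∈ feasibleSet A b) (h : ∀ y ∈ feasibleSet A b, c ⬝ᵥ y ≤ c ⬝ᵥ x → 0 ≤ u ⬝ᵥ (y - x)) :
    ∃ μ ≥ 0, ∀ y ∈ feasibleSet A b, 0 ≤ u ⬝ᵥ (y - x) + μ * (c ⬝ᵥ (y - x)) := by
  classical
  let H : (κ ⊕ κ) ⊕ {i // x i = 0} → ι → ℝ :=
    Sum.elim (Sum.elim (fun k => A k) fun k => -A k) fun i => Pi.single i 1
  have hH : ∀ w, (∀ j, 0 ≤ H j ⬝ᵥ w) ↔ A *ᵥ w = 0 ∧ ∀ i, x i = 0 → 0 ≤ w i := by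
    intro w
    simp only [H, Sum.forall, Sum.elim_inl, Sum.elim_inr, neg_dotProduct, neg_nonneg,
      single_dotProduct, one_mul, Subtype.forall, ← forall_and, ← le_antisymm_iff, funext_iff]
    exact and_congr (forall_congr' fun k => eq_comm) Iff.rfl
  obtain ⟨μ, hμ, hpen⟩ := exists_nonneg_forall_dotProduct_add_mul_nonneg H u c fun w hw hcw => by
    obtain ⟨hAw, hw⟩ := (hH w).1 hw
    obtain ⟨ε, hεw, hε⟩ :=
      ((eventually_add_smul_mem_feasibleSet hx hAw hw).and self_mem_nhdsWithin).exists
    have := h _ hεw (by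
      rw [dotProduct_add, dotProduct_smul, smul_eq_mul]
      nlinarith [show (0 : ℝ) < ε from hε])
    rw [add_sub_cancel_left, dotProduct_smul, smul_eq_mul] at this
    exact nonneg_of_mul_nonneg_right this hε
  refine ⟨μ, hμ, fun y hy => hpen _ ((hH _).2 ⟨?_, fun i hi => ?_⟩)⟩
  · simp [mulVec_sub, hy.1, hx.1]
  · simpa [hi] using hy.2 i

end LinearProgram

theorem dotProduct_le_of_regularized_le {ι : Type*} [Fintype ι] {c x y : ι → ℝ} {γ μ : ℝ}
    (hμγ : μ < γ) (hpen : 0 ≤ y ⬝ᵥ (x - y) + μ * (c ⬝ᵥ (x - y)))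
    (hle : γ * (c ⬝ᵥ x) + 1 / 2 * (x ⬝ᵥ x) ≤ γ * (c ⬝ᵥ y) + 1 / 2 * (y ⬝ᵥ y)) :
    c ⬝ᵥ x ≤ c ⬝ᵥ y := by
  have hsq : (x - y) ⬝ᵥ (x - y) = x ⬝ᵥ x - 2 * (y ⬝ᵥ x) + y ⬝ᵥ y := by
    simp only [dotProduct_sub, sub_dotProduct, dotProduct_comm x y]
    ring
  have hq : 0 ≤ (x - y) ⬝ᵥ (x - y) := Finset.sum_nonneg fun i _ => mul_self_nonneg _
  simp only [dotProduct_sub] at hpen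
  have hgap : (γ - μ) * (c ⬝ᵥ x - c ⬝ᵥ y) ≤ 0 := by linarith
  exact sub_nonpos.1 (nonpos_of_mul_nonpos_right hgap (sub_pos.2 hμγ))

/-- There exists γ_min > 0 such that for every γ ≥ γ_min, every solution of the
regularized problem (P_γ) is a solution of the linear program (P).  The LP
`min cᵀx s.t. Ax = b, x ≥ 0` is assumed feasible with finite optimal value. -/
theorem exact_regularization (n m : ℕ) (c : Fin n → ℝ) (b : Fin m → ℝ)
    (A : Matrix (Fin m) (Fin n) ℝ)
    (hfeas : ∃ x : Fin n → ℝ, A *ᵥ x = b ∧ ∀ i, 0 ≤ x i)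
    (hbdd : ∃ p : ℝ, ∀ x : Fin n → ℝ, A *ᵥ x = b → (∀ i, 0 ≤ x i) → p ≤ c ⬝ᵥ x) :
    ∃ γmin : ℝ, 0 < γmin ∧ ∀ γ : ℝ, γmin ≤ γ → ∀ x : Fin n → ℝ,
      -- x is a solution of the regularized problem (P_γ)
      ((A *ᵥ x = b ∧ ∀ i, 0 ≤ x i) ∧
        ∀ y : Fin n → ℝ, A *ᵥ y = b → (∀ i, 0 ≤ y i) →
          γ * (c ⬝ᵥ x) + (1 / 2) * (x ⬝ᵥ x) ≤ γ * (c ⬝ᵥ y) + (1 / 2) * (y ⬝ᵥ y)) →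
      -- x is a solution of the linear program (P)
      ((A *ᵥ x = b ∧ ∀ i, 0 ≤ x i) ∧
        ∀ y : Fin n → ℝ, A *ᵥ y = b → (∀ i, 0 ≤ y i) → c ⬝ᵥ x ≤ c ⬝ᵥ y) := by
  obtain ⟨p, hp⟩ := hbdd
  obtain ⟨xstar, hxstar, hmin⟩ := exists_isMinOn_dotProduct_feasibleSet c hfeas
    ⟨p, forall_mem_image.2 fun x hx => hp x hx.1 hx.2⟩
  obtain ⟨xbar, ⟨hxbar, hxbarc⟩, hproj⟩ :=
    exists_forall_dotProduct_sub_nonneg (K := feasibleSet A b ∩ {x | c ⬝ᵥ x ≤ c ⬝ᵥ xstar})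
      ⟨xstar, hxstar, le_refl (c ⬝ᵥ xstar)⟩
      (isClosed_feasibleSet.inter (isClosed_le (by fun_prop) (by fun_prop)))
      (convex_feasibleSet.inter (convex_halfSpace_le (dotProductBilin ℝ ℝ c).isLinear _))
  obtain ⟨μ, hμ, hpen⟩ := exists_forall_feasibleSet_dotProduct_add_mul_nonneg c xbar hxbar
    fun y hy hcy => hproj y ⟨hy, hcy.trans hxbarc⟩
  refine ⟨μ + 1, by linarith, fun γ hγ x ⟨hx, hopt⟩ => ⟨hx, fun y hyA hy => ?_⟩⟩
  calc c ⬝ᵥ x ≤ c ⬝ᵥ xbar :=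
        dotProduct_le_of_regularized_le (by linarith) (hpen x hx) (hopt xbar hxbar.1 hxbar.2)
    _ ≤ c ⬝ᵥ xstar := hxbarc
    _ ≤ c ⬝ᵥ y := hmin ⟨hyA, hy⟩
end

section
/- Suppose (x*,z*) satisfies the KKT conditions for (P₁), i.e., c + x* + Aᵀz* ≥ 0, Ax* = b, x* ≥ 0, and (c + x* + Aᵀz*)ᵀx* = 0, and let K > ‖c + x* + Aᵀz*‖_∞. Then (x*,z*) is a saddle point of L^K; in particular, L^K(x,z*) ≥ L^K(x*,z*) = cᵀx* + ½x*ᵀx* for all x ∈ ℝⁿ, and L^K(x*,z) = L^K(x*,z*) for all z ∈ ℝᵐ. -/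
/-!
Put `g = c + x* + Aᵀz*`. Feasibility of `x*` makes both the coupling term and the penalty vanish
at `x*`, so `L^K(x*, z) = cᵀx* + ½x*ᵀx*` for every `z`. For any `x`, expanding `L^K(x, z*)` around
`x*` gives `gᵀ(x - x*)` plus two squares plus the penalty; complementarity turns `gᵀ(x - x*)`
into `gᵀx`, and since `0 ≤ gᵢ ≤ K` each term `gᵢxᵢ + K·max(0, -xᵢ)` is nonnegative.
-/

open Matrix BigOperators

noncomputable def LK {n m : ℕ} (A : Matrix (Fin m) (Fin n) ℝ) (b : Fin m → ℝ)
    (c : Fin n → ℝ) (K : ℝ) (x : Fin n → ℝ) (z : Fin m → ℝ) : ℝ :=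
  c ⬝ᵥ x + (1 / 2) * (x ⬝ᵥ x)
    + (1 / 2) * ((A *ᵥ x - b) ⬝ᵥ (A *ᵥ x - b))
    + z ⬝ᵥ (A *ᵥ x - b)
    + K * ∑ i, max 0 (-(x i))

noncomputable def fmap {n m : ℕ} (A : Matrix (Fin m) (Fin n) ℝ) (b : Fin m → ℝ)
    (c : Fin n → ℝ) (x : Fin n → ℝ) (z : Fin m → ℝ) : Fin n → ℝ :=
  -(Aᵀ *ᵥ z + c + x) - Aᵀ *ᵥ (A *ᵥ x - b)

def sgm {n m : ℕ} (A : Matrix (Fin m) (Fin n) ℝ) (b : Fin m → ℝ)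
    (c : Fin n → ℝ) (x : Fin n → ℝ) (z : Fin m → ℝ) : Set (Fin n) :=
  {i | 0 ≤ fmap A b c x z i ∨ 0 < x i}

open Classical in
noncomputable def ISet {ι : Type*} [Fintype ι] [DecidableEq ι] (S : Set ι) : Matrix ι ι ℝ :=
  Matrix.diagonal fun i => if i ∈ S then 1 else 0

def IsSaddle {n m : ℕ} (A : Matrix (Fin m) (Fin n) ℝ) (b : Fin m → ℝ)
    (c : Fin n → ℝ) (K : ℝ) (xb : Fin n → ℝ) (zb : Fin m → ℝ) : Prop :=
  ∀ x z, LK A b c K xb z ≤ LK A b c K xb zb ∧ LK A b c K xb zb ≤ LK A b c K x zb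

section Penalty

variable {ι : Type*} [Fintype ι]

lemma sum_max_zero_neg_eq_zero {x : ι → ℝ} (hx : ∀ i, 0 ≤ x i) :
    ∑ i, max 0 (-(x i)) = 0 :=
  Finset.sum_eq_zero fun i _ => max_eq_left (neg_nonpos.mpr (hx i))

lemma mul_add_mul_max_zero_neg_nonneg {g K : ℝ} (hg : 0 ≤ g) (hgK : g ≤ K) (x : ℝ) :
    0 ≤ g * x + K * max 0 (-x) := by
  rcases le_total 0 x with hx | hx
  · rw [max_eq_left (neg_nonpos.mpr hx), mul_zero, add_zero]
    exact mul_nonneg hg hx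
  · rw [max_eq_right (neg_nonneg.mpr hx)]
    nlinarith

lemma dotProduct_add_mul_sum_max_zero_neg_nonneg {g : ι → ℝ} {K : ℝ} (hg : ∀ i, 0 ≤ g i)
    (hgK : ∀ i, g i ≤ K) (x : ι → ℝ) :
    0 ≤ g ⬝ᵥ x + K * ∑ i, max 0 (-(x i)) := by
  rw [dotProduct, Finset.mul_sum, ← Finset.sum_add_distrib]
  exact Finset.sum_nonneg fun i _ => mul_add_mul_max_zero_neg_nonneg (hg i) (hgK i) (x i)

end Penalty

lemma dotProduct_self_nonneg_real {ι : Type*} [Fintype ι] (v : ι → ℝ) : 0 ≤ v ⬝ᵥ v :=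
  Finset.sum_nonneg fun i _ => mul_self_nonneg (v i)

lemma transpose_mulVec_dotProduct {m n : Type*} [Fintype m] [Fintype n]
    (A : Matrix m n ℝ) (z : m → ℝ) (v : n → ℝ) : (Aᵀ *ᵥ z) ⬝ᵥ v = z ⬝ᵥ (A *ᵥ v) := by
  rw [mulVec_transpose, dotProduct_mulVec]

section AugmentedLagrangian

variable {n m : ℕ} {A : Matrix (Fin m) (Fin n) ℝ} {b : Fin m → ℝ} {xs : Fin n → ℝ}

lemma LK_of_mulVec_eq (c : Fin n → ℝ) (K : ℝ) (hA : A *ᵥ xs = b) (z : Fin m → ℝ) :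
    LK A b c K xs z = c ⬝ᵥ xs + (1 / 2) * (xs ⬝ᵥ xs) + K * ∑ i, max 0 (-(xs i)) := by
  simp [LK, hA]

lemma LK_eq_LK_add_of_mulVec_eq (c : Fin n → ℝ) (K : ℝ) (hA : A *ᵥ xs = b)
    (x : Fin n → ℝ) (z : Fin m → ℝ) :
    LK A b c K x z = LK A b c K xs z + (c + xs + Aᵀ *ᵥ z) ⬝ᵥ (x - xs)
      + (1 / 2) * ((x - xs) ⬝ᵥ (x - xs)) + (1 / 2) * ((A *ᵥ x - b) ⬝ᵥ (A *ᵥ x - b))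
      + K * (∑ i, max 0 (-(x i)) - ∑ i, max 0 (-(xs i))) := by
  have hcoupling : (Aᵀ *ᵥ z) ⬝ᵥ (x - xs) = z ⬝ᵥ (A *ᵥ x - b) := by
    rw [transpose_mulVec_dotProduct, mulVec_sub, hA]
  rw [LK_of_mulVec_eq c K hA, add_dotProduct, add_dotProduct, hcoupling, LK]
  simp only [dotProduct_sub, sub_dotProduct, dotProduct_comm xs x]
  ring

end AugmentedLagrangian

/-- If (x*,z*) satisfies the KKT conditions for (P₁) and K > ‖c + x* + Aᵀz*‖_∞,
then (x*,z*) is a saddle point of L^K: L^K(x,z*) ≥ L^K(x*,z*) = cᵀx* + ½x*ᵀx* for all x,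
and L^K(x*,z) = L^K(x*,z*) for all z.  (The norm on `Fin n → ℝ` is the sup norm.) -/
theorem KKT_gives_saddle (n m : ℕ) (c : Fin n → ℝ) (b : Fin m → ℝ)
    (A : Matrix (Fin m) (Fin n) ℝ) (xs : Fin n → ℝ) (zs : Fin m → ℝ) (K : ℝ)
    (hKKT1 : ∀ i, 0 ≤ (c + xs + Aᵀ *ᵥ zs) i)
    (hKKT2 : A *ᵥ xs = b)
    (hKKT3 : ∀ i, 0 ≤ xs i)
    (hKKT4 : (c + xs + Aᵀ *ᵥ zs) ⬝ᵥ xs = 0)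
    (hK : ‖c + xs + Aᵀ *ᵥ zs‖ < K) :
    (∀ x : Fin n → ℝ, LK A b c K xs zs ≤ LK A b c K x zs) ∧
    LK A b c K xs zs = c ⬝ᵥ xs + (1 / 2) * (xs ⬝ᵥ xs) ∧
    (∀ z : Fin m → ℝ, LK A b c K xs z = LK A b c K xs zs) := by
  set g := c + xs + Aᵀ *ᵥ zs
  have hpen := sum_max_zero_neg_eq_zero hKKT3
  have hval z : LK A b c K xs z = c ⬝ᵥ xs + (1 / 2) * (xs ⬝ᵥ xs) := by
    rw [LK_of_mulVec_eq c K hKKT2, hpen, mul_zero, add_zero]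
  refine ⟨fun x => ?_, hval zs, fun z => (hval z).trans (hval zs).symm⟩
  have hgK i : g i ≤ K :=
    (le_abs_self _).trans ((norm_le_pi_norm g i).trans hK.le)
  have hgx : g ⬝ᵥ (x - xs) = g ⬝ᵥ x := by rw [dotProduct_sub, hKKT4, sub_zero]
  rw [LK_eq_LK_add_of_mulVec_eq c K hKKT2 x zs, hgx, hpen, sub_zero]
  have := dotProduct_add_mul_sum_max_zero_neg_nonneg hKKT1 hgK x
  have := dotProduct_self_nonneg_real (x - xs)
  have := dotProduct_self_nonneg_real (A *ᵥ x - b)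
  linarith
end

section
/- Let x ∈ ℝⁿ with x ≥ 0, z ∈ ℝᵐ, and K ≥ ‖f(x,z)‖_∞. Define a ∈ ℝⁿ componentwise by a_i = f_i(x,z) if x_i > 0 and a_i = max{0, f_i(x,z)} if x_i = 0. Then −a is a subgradient of the convex function y ↦ L^K(y,z) at x, that is, L^K(y,z) ≥ L^K(x,z) − aᵀ(y − x) for all y ∈ ℝⁿ. Moreover, for all w ∈ ℝᵐ, L^K(x,w) = L^K(x,z) + (w − z)ᵀ(Ax − b). -/
/-!
Write `L^K(·, z) = q + K·p`, where `q` is the convex quadratic part, whose gradient at `x` is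
`-f(x, z)`, and `p y = ∑ᵢ max 0 (-yᵢ)`. Since `q` is convex, `q y ≥ q x - f ⬝ (y - x)`.
For `x ≥ 0` the vector `f - a` vanishes on the support of `x` and equals `min fᵢ 0 ∈ [-K, 0]`
where `xᵢ = 0`, so it is a subgradient of `K·p` at `x`. Adding the two inequalities gives the
claim. In `z` the Lagrangian is affine.
-/

open Matrix BigOperators

theorem sub_mul_sub_le_mul_max_zero_neg {K f a x y : ℝ} (hx : 0 ≤ x) (hf : |f| ≤ K)
    (ha : (0 < x → a = f) ∧ (x = 0 → a = max 0 f)) :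
    (f - a) * (y - x) ≤ K * max 0 (-y) := by
  have hK : 0 ≤ K := (abs_nonneg f).trans hf
  rcases hx.lt_or_eq with hpos | hzero
  · rw [ha.1 hpos, sub_self, zero_mul]
    exact mul_nonneg hK (le_max_left _ _)
  · rw [ha.2 hzero.symm, ← hzero, sub_zero]
    have hd : max 0 f - f ≤ K := by
      rcases le_total 0 f with h | h
      · rw [max_eq_right h]; linarith
      · rw [max_eq_left h, zero_sub]; exact (neg_le_abs f).trans hf
    have hd0 : 0 ≤ max 0 f - f := sub_nonneg.mpr (le_max_right _ _)
    have hy : -y ≤ max 0 (-y) := le_max_right _ _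
    calc (f - max 0 f) * y = (max 0 f - f) * -y := by ring
      _ ≤ (max 0 f - f) * max 0 (-y) := mul_le_mul_of_nonneg_left hy hd0
      _ ≤ K * max 0 (-y) := mul_le_mul_of_nonneg_right hd (le_max_left _ _)

theorem dotProduct_sub_le_mul_sum_max_zero_neg {ι : Type*} [Fintype ι] {K : ℝ}
    {f a x y : ι → ℝ} (hx : ∀ i, 0 ≤ x i) (hf : ‖f‖ ≤ K)
    (ha : ∀ i, (0 < x i → a i = f i) ∧ (x i = 0 → a i = max 0 (f i))) :
    (f - a) ⬝ᵥ (y - x) ≤ K * ∑ i, max 0 (-y i) := by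
  rw [Finset.mul_sum]
  refine Finset.sum_le_sum fun i _ => sub_mul_sub_le_mul_max_zero_neg (hx i) ?_ (ha i)
  simpa only [Real.norm_eq_abs] using (norm_le_pi_norm f i).trans hf

section Lagrangian

variable {n m : ℕ} (A : Matrix (Fin m) (Fin n) ℝ) (b : Fin m → ℝ) (c : Fin n → ℝ) (K : ℝ)

theorem LK_eq_add_fmap_dotProduct (x y : Fin n → ℝ) (z : Fin m → ℝ) :
    LK A b c K y z = LK A b c K x z - fmap A b c x z ⬝ᵥ (y - x)
      + (1 / 2) * ((y - x) ⬝ᵥ (y - x))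
      + (1 / 2) * ((A *ᵥ (y - x)) ⬝ᵥ (A *ᵥ (y - x)))
      + K * (∑ i, max 0 (-y i) - ∑ i, max 0 (-x i)) := by
  unfold LK fmap
  simp only [mulVec_sub, neg_add, sub_dotProduct, dotProduct_sub, add_dotProduct, neg_dotProduct,
    mulVec_transpose, ← dotProduct_mulVec]
  simp only [dotProduct_comm y x, dotProduct_comm b (A *ᵥ x), dotProduct_comm b (A *ᵥ y),
    dotProduct_comm (A *ᵥ y) (A *ᵥ x)]
  ring

theorem LK_sub_fmap_dotProduct_le (x y : Fin n → ℝ) (z : Fin m → ℝ) :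
    LK A b c K x z - fmap A b c x z ⬝ᵥ (y - x)
      + K * (∑ i, max 0 (-y i) - ∑ i, max 0 (-x i)) ≤ LK A b c K y z := by
  have hd : 0 ≤ (y - x) ⬝ᵥ (y - x) := by simpa using dotProduct_self_star_nonneg (y - x)
  have hAd : 0 ≤ (A *ᵥ (y - x)) ⬝ᵥ (A *ᵥ (y - x)) := by
    simpa using dotProduct_self_star_nonneg (A *ᵥ (y - x))
  rw [LK_eq_add_fmap_dotProduct A b c K x y z]
  linarith

theorem LK_eq_add_dotProduct (x : Fin n → ℝ) (z w : Fin m → ℝ) :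
    LK A b c K x w = LK A b c K x z + (w - z) ⬝ᵥ (A *ᵥ x - b) := by
  simp only [LK, sub_dotProduct]
  ring

end Lagrangian

/-- For x ≥ 0, z, and K ≥ ‖f(x,z)‖_∞, the vector −a (with
a_i = f_i(x,z) if x_i > 0 and a_i = max{0, f_i(x,z)} if x_i = 0) is a subgradient of
y ↦ L^K(y,z) at x; moreover L^K(x,·) is affine: L^K(x,w) = L^K(x,z) + (w−z)ᵀ(Ax−b). -/
theorem generalized_gradient_element (n m : ℕ) (c : Fin n → ℝ) (b : Fin m → ℝ)
    (A : Matrix (Fin m) (Fin n) ℝ) (x : Fin n → ℝ) (z : Fin m → ℝ) (K : ℝ)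
    (hx : ∀ i, 0 ≤ x i)
    (hK : ‖fmap A b c x z‖ ≤ K)
    (a : Fin n → ℝ)
    (ha : ∀ i, (0 < x i → a i = fmap A b c x z i) ∧
               (x i = 0 → a i = max 0 (fmap A b c x z i))) :
    (∀ y : Fin n → ℝ, LK A b c K x z - a ⬝ᵥ (y - x) ≤ LK A b c K y z) ∧
    (∀ w : Fin m → ℝ, LK A b c K x w = LK A b c K x z + (w - z) ⬝ᵥ (A *ᵥ x - b)) := by
  refine ⟨fun y => ?_, LK_eq_add_dotProduct A b c K x z⟩
  have hpx : ∑ i, max 0 (-x i) = 0 :=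
    Finset.sum_eq_zero fun i _ => max_eq_left (neg_nonpos.mpr (hx i))
  have hpen := dotProduct_sub_le_mul_sum_max_zero_neg (y := y) hx hK ha
  have hquad := LK_sub_fmap_dotProduct_le A b c K x y z
  rw [hpx, sub_zero] at hquad
  rw [sub_dotProduct] at hpen
  linarith
end

section
/- Assume x̂ ∈ ℝⁿ with x̂ ≥ 0, ẑ ∈ ℝᵐ, K ≥ ‖f(x̂,ẑ)‖_∞, and (x̄,z̄) is a saddle point of L^K with Ax̄ = b and x̄ ≥ 0. Set p̂ = σ(x̂,ẑ). Then for all x ∈ ℝⁿ and z ∈ ℝᵐ, with e_x = x − x̂ and e_z = z − ẑ: (x − x̄)ᵀ I_{p̂} f(x̂,ẑ) + (z − z̄)ᵀ(Ax̂ − b) ≤ −½(Ax̂ − b)ᵀ(Ax̂ − b) + e_xᵀ I_{p̂} f(x̂,ẑ) + e_zᵀ(Ax̂ − b). -/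
open Matrix BigOperators

/-!
Write `r = A x̂ - b` and `g = I_{p̂} f(x̂, ẑ)`. The claimed inequality is equivalent to
`(x̂ - x̄)ᵀ g + (ẑ - z̄)ᵀ r + ½ rᵀ r ≤ 0`. Off `p̂` we have `x̂_i = 0` and `f_i < 0`, so masking
by `I_{p̂}` can only decrease `(x̂ - x̄)ᵀ f` when `x̄ ≥ 0`. Since `A x̄ = b`, the term `(x̂ - x̄)ᵀ f`
is explicit in `r`, and the saddle inequality `L^K(x̄, z̄) ≤ L^K(x̂, z̄)` (whose penalty terms
vanish at the nonnegative points `x̂, x̄`) bounds what remains by `-½ ‖x̂ - x̄‖² ≤ 0`.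
-/

open Classical in
lemma ISet_mulVec_apply {ι : Type*} [Fintype ι] [DecidableEq ι] (S : Set ι) (v : ι → ℝ)
    (i : ι) : (ISet S *ᵥ v) i = if i ∈ S then v i else 0 := by
  simp [ISet, mulVec_diagonal]

lemma sub_dotProduct_ISet_mulVec_le {ι : Type*} [Fintype ι] [DecidableEq ι] {S : Set ι}
    {v y w : ι → ℝ} (hw : ∀ i, 0 ≤ w i) (hS : ∀ i ∉ S, v i ≤ 0 ∧ y i = 0) :
    (y - w) ⬝ᵥ (ISet S *ᵥ v) ≤ (y - w) ⬝ᵥ v := by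
  refine Finset.sum_le_sum fun i _ => ?_
  rw [ISet_mulVec_apply]
  split_ifs with hi
  · rfl
  · obtain ⟨hv, hy⟩ := hS i hi
    simp only [Pi.sub_apply, hy, zero_sub, mul_zero, neg_mul]
    exact neg_nonneg.mpr (mul_nonpos_of_nonneg_of_nonpos (hw i) hv)

section

variable {n m : ℕ} (A : Matrix (Fin m) (Fin n) ℝ) (b : Fin m → ℝ) (c : Fin n → ℝ)

lemma notMem_sgm {x : Fin n → ℝ} {z : Fin m → ℝ} {i : Fin n} (hi : i ∉ sgm A b c x z) :
    fmap A b c x z i < 0 ∧ x i ≤ 0 := by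
  simpa [sgm, not_or] using hi

lemma LK_of_nonneg (K : ℝ) {x : Fin n → ℝ} (hx : ∀ i, 0 ≤ x i) (z : Fin m → ℝ) :
    LK A b c K x z = c ⬝ᵥ x + (1 / 2) * (x ⬝ᵥ x)
      + (1 / 2) * ((A *ᵥ x - b) ⬝ᵥ (A *ᵥ x - b)) + z ⬝ᵥ (A *ᵥ x - b) := by
  have hpen : ∑ i, max 0 (-(x i)) = 0 :=
    Finset.sum_eq_zero fun i _ => max_eq_left (neg_nonpos.mpr (hx i))
  simp [LK, hpen]

lemma sub_dotProduct_fmap {x xb : Fin n → ℝ} (hAxb : A *ᵥ xb = b) (z : Fin m → ℝ) :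
    (x - xb) ⬝ᵥ fmap A b c x z
      = -(z ⬝ᵥ (A *ᵥ x - b)) - (x - xb) ⬝ᵥ (c + x)
        - (A *ᵥ x - b) ⬝ᵥ (A *ᵥ x - b) := by
  have hAt : ∀ v : Fin m → ℝ, (x - xb) ⬝ᵥ (Aᵀ *ᵥ v) = (A *ᵥ x - b) ⬝ᵥ v := fun v => by
    rw [dotProduct_mulVec, vecMul_transpose, mulVec_sub, hAxb]
  simp only [fmap, dotProduct_sub, dotProduct_neg, dotProduct_add, hAt, dotProduct_comm _ z]
  ring

lemma sub_dotProduct_fmap_add_le {K : ℝ} {xh xb : Fin n → ℝ} {zh zb : Fin m → ℝ}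
    (hxh : ∀ i, 0 ≤ xh i) (hxb : ∀ i, 0 ≤ xb i) (hAxb : A *ᵥ xb = b)
    (hmin : LK A b c K xb zb ≤ LK A b c K xh zb) :
    (xh - xb) ⬝ᵥ fmap A b c xh zh + (zh - zb) ⬝ᵥ (A *ᵥ xh - b)
      + (1 / 2) * ((A *ᵥ xh - b) ⬝ᵥ (A *ᵥ xh - b)) ≤ 0 := by
  rw [LK_of_nonneg A b c K hxh, LK_of_nonneg A b c K hxb, hAxb, sub_self,
    dotProduct_zero, dotProduct_zero] at hmin
  have hsq : 0 ≤ (xh - xb) ⬝ᵥ (xh - xb) := Finset.sum_nonneg fun i _ => mul_self_nonneg _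
  rw [sub_dotProduct_fmap A b c hAxb]
  generalize A *ᵥ xh - b = r at hmin ⊢
  rw [dotProduct_comm c xh, dotProduct_comm c xb] at hmin
  simp only [sub_dotProduct, dotProduct_sub, dotProduct_add, dotProduct_comm xb xh] at hsq ⊢
  linarith

end

theorem V1_lie_derivative_bound_general (n m : ℕ) (c : Fin n → ℝ) (b : Fin m → ℝ)
    (A : Matrix (Fin m) (Fin n) ℝ) (xh : Fin n → ℝ) (zh : Fin m → ℝ) (K : ℝ)
    (hxh : ∀ i, 0 ≤ xh i)
    (xb : Fin n → ℝ) (zb : Fin m → ℝ)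
    (hsaddle : IsSaddle A b c K xb zb)
    (hAxb : A *ᵥ xb = b) (hxb : ∀ i, 0 ≤ xb i) :
    ∀ (x : Fin n → ℝ) (z : Fin m → ℝ),
      (x - xb) ⬝ᵥ (ISet (sgm A b c xh zh) *ᵥ fmap A b c xh zh)
        + (z - zb) ⬝ᵥ (A *ᵥ xh - b)
      ≤ -(1 / 2) * ((A *ᵥ xh - b) ⬝ᵥ (A *ᵥ xh - b))
        + (x - xh) ⬝ᵥ (ISet (sgm A b c xh zh) *ᵥ fmap A b c xh zh)
        + (z - zh) ⬝ᵥ (A *ᵥ xh - b) := by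
  intro x z
  have hmask := sub_dotProduct_ISet_mulVec_le (S := sgm A b c xh zh) (v := fmap A b c xh zh)
    (y := xh) hxb fun i hi =>
      ⟨(notMem_sgm A b c hi).1.le, le_antisymm (notMem_sgm A b c hi).2 (hxh i)⟩
  have hkey := sub_dotProduct_fmap_add_le A b c (zh := zh) hxh hxb hAxb (hsaddle xh zb).2
  simp only [sub_dotProduct] at hmask hkey ⊢
  linarith

/-- Bound on the Lie derivative of V₁ along the sample-and-hold flow:
(x−x̄)ᵀI_{p̂}f(x̂,ẑ) + (z−z̄)ᵀ(Ax̂−b)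
  ≤ −½(Ax̂−b)ᵀ(Ax̂−b) + e_xᵀI_{p̂}f(x̂,ẑ) + e_zᵀ(Ax̂−b),
with e_x = x−x̂, e_z = z−ẑ, p̂ = σ(x̂,ẑ), provided x̂ ≥ 0, K ≥ ‖f(x̂,ẑ)‖_∞, and
(x̄,z̄) is a saddle point of L^K with Ax̄ = b, x̄ ≥ 0. -/
theorem V1_lie_derivative_bound (n m : ℕ) (c : Fin n → ℝ) (b : Fin m → ℝ)
    (A : Matrix (Fin m) (Fin n) ℝ) (xh : Fin n → ℝ) (zh : Fin m → ℝ) (K : ℝ)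
    (hxh : ∀ i, 0 ≤ xh i)
    (hK : ‖fmap A b c xh zh‖ ≤ K)
    (xb : Fin n → ℝ) (zb : Fin m → ℝ)
    (hsaddle : IsSaddle A b c K xb zb)
    (hAxb : A *ᵥ xb = b) (hxb : ∀ i, 0 ≤ xb i) :
    ∀ (x : Fin n → ℝ) (z : Fin m → ℝ),
      (x - xb) ⬝ᵥ (ISet (sgm A b c xh zh) *ᵥ fmap A b c xh zh)
        + (z - zb) ⬝ᵥ (A *ᵥ xh - b)
      ≤ -(1 / 2) * ((A *ᵥ xh - b) ⬝ᵥ (A *ᵥ xh - b))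
        + (x - xh) ⬝ᵥ (ISet (sgm A b c xh zh) *ᵥ fmap A b c xh zh)
        + (z - zh) ⬝ᵥ (A *ᵥ xh - b) :=
  V1_lie_derivative_bound_general n m c b A xh zh K hxh xb zb hsaddle hAxb hxb
end

section
/- Assume ρ(AᵀA) ≤ 1, x̂ ∈ ℝⁿ with x̂ ≥ 0, ẑ ∈ ℝᵐ, K ≥ ‖f(x̂,ẑ)‖_∞, and (x̄,z̄) is a saddle point of L^K with Ax̄ = b and x̄ ≥ 0. Let x ∈ ℝⁿ, z ∈ ℝᵐ and suppose σ(x,z) = σ(x̂,ẑ) =: p̂ and, with e_x = x − x̂ and e_z = z − ẑ, that 40 e_xᵀe_x + 20 e_zᵀe_z ≤ ¼ f(x̂,ẑ)ᵀ I_{p̂} f(x̂,ẑ) + ⅛ (Ax̂ − b)ᵀ(Ax̂ − b). Then (x − x̄)ᵀ I_{p̂} f(x̂,ẑ) + (z − z̄)ᵀ(Ax̂ − b) − f(x,z)ᵀ I_{p̂} (AᵀA + I) I_{p̂} f(x̂,ẑ) − f(x,z)ᵀ I_{p̂} Aᵀ(Ax̂ − b) + (Ax − b)ᵀ A I_{p̂}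 f(x̂,ẑ) ≤ −¼ f(x̂,ẑ)ᵀ I_{p̂} f(x̂,ẑ) − ⅛ (Ax̂ − b)ᵀ(Ax̂ − b) ≤ 0. -/
/-
Write `w = I_p̂ f(x̂,ẑ)` and `r = A x̂ - b`. At the sample point the Lie derivative is at most
`-|w|² - |A w|² - |r|²`: the saddle point yields the KKT conditions `f(x̄,z̄) ≤ 0` and
`x̄ᵢ fᵢ(x̄,z̄) = 0`, and since `f` is affine with `f(x̂,ẑ) - f(x̄,z̄) = -(e + Aᵀ(A e + d))` for
`e = x̂ - x̄`, `d = ẑ - z̄` (so `A e = r`), the cross terms cancel. Passing to `(x,z)` only adds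
terms bilinear in the sampling errors `(eₓ, e_z)` and in `(w, r)`. As `ρ(AᵀA) ≤ 1` makes `A` and
`Aᵀ` contractions, Young's inequality bounds them by `40|eₓ|² + 20|e_z|² + ½(|w|² + |A w|² + |r|²)`,
and the trigger condition absorbs the first two summands.
-/

open Matrix BigOperators

open Filter Topology

section DotProduct
variable {ι : Type*} [Fintype ι]

lemma dotProduct_self_nonneg (v : ι → ℝ) : 0 ≤ v ⬝ᵥ v := dotProduct_star_self_nonneg v

lemma two_mul_dotProduct_le (u v : ι → ℝ) {ε : ℝ} (hε : 0 < ε) :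
    2 * (u ⬝ᵥ v) ≤ ε * (u ⬝ᵥ u) + ε⁻¹ * (v ⬝ᵥ v) := by
  simp only [dotProduct, Finset.mul_sum, ← Finset.sum_add_distrib]
  gcongr with i
  simpa [sq, mul_assoc] using two_mul_le_add_mul_sq (a := u i) (b := v i) hε

lemma add_dotProduct_add_self_le (u v : ι → ℝ) :
    (u + v) ⬝ᵥ (u + v) ≤ 2 * (u ⬝ᵥ u + v ⬝ᵥ v) := by
  have := two_mul_dotProduct_le u v one_pos
  simp only [add_dotProduct, dotProduct_add, dotProduct_comm v u] at *
  linarith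

lemma ISet_mulVec [DecidableEq ι] (S : Set ι) (v : ι → ℝ) : ISet S *ᵥ v = S.indicator v := by
  ext i
  by_cases hi : i ∈ S <;> simp [ISet, mulVec_diagonal, hi]

lemma dotProduct_indicator (S : Set ι) (u v : ι → ℝ) :
    u ⬝ᵥ S.indicator v = S.indicator u ⬝ᵥ v := by
  refine Finset.sum_congr rfl fun i _ => ?_
  by_cases hi : i ∈ S <;> simp [hi]

lemma dotProduct_indicator_self (S : Set ι) (v : ι → ℝ) :
    v ⬝ᵥ S.indicator v = S.indicator v ⬝ᵥ S.indicator v := by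
  refine Finset.sum_congr rfl fun i _ => ?_
  by_cases hi : i ∈ S <;> simp [hi]

lemma indicator_dotProduct_self_le (S : Set ι) (v : ι → ℝ) :
    S.indicator v ⬝ᵥ S.indicator v ≤ v ⬝ᵥ v := by
  refine Finset.sum_le_sum fun i _ => ?_
  by_cases hi : i ∈ S <;> simp [hi, mul_self_nonneg]

lemma dotProduct_indicator_le {f x y : ι → ℝ} (hx : ∀ i, 0 ≤ x i) (hy : ∀ i, 0 ≤ y i) :
    (x - y) ⬝ᵥ {i | 0 ≤ f i ∨ 0 < x i}.indicator f ≤ (x - y) ⬝ᵥ f := by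
  refine Finset.sum_le_sum fun i _ => ?_
  by_cases hi : 0 ≤ f i ∨ 0 < x i
  · simp [hi]
  · push Not at hi
    have hxi : x i = 0 := le_antisymm hi.2 (hx i)
    simp only [Set.indicator_of_notMem (s := {i | 0 ≤ f i ∨ 0 < x i}) (by simpa using hi),
      Pi.sub_apply, hxi, zero_sub, mul_zero]
    nlinarith [hy i, hi.1]

end DotProduct

section Contraction
variable {m n : Type*} [Fintype m] [Fintype n] [DecidableEq n] {A : Matrix m n ℝ}

lemma posSemidef_one_sub_of_spectralRadius_le_one {B : Matrix n n ℝ} (hB : B.IsHermitian)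
    (hρ : spectralRadius ℝ B ≤ 1) : (1 - B).PosSemidef := by
  refine posSemidef_iff_isHermitian_and_spectrum_nonneg.2 ⟨isHermitian_one.sub hB, ?_⟩
  rw [← map_one (algebraMap ℝ (Matrix n n ℝ)), ← spectrum.singleton_sub_eq]
  rintro _ ⟨_, rfl, y, hy, rfl⟩
  have : ‖y‖₊ ≤ (1 : NNReal) := by exact_mod_cast (le_iSup₂ (α := ENNReal) y hy).trans hρ
  have : |y| ≤ 1 := by exact_mod_cast this
  show 0 ≤ 1 - y
  linarith [le_abs_self y]

lemma dotProduct_mulVec_self_le (hρ : spectralRadius ℝ (Aᵀ * A) ≤ 1) (v : n → ℝ) :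
    (A *ᵥ v) ⬝ᵥ (A *ᵥ v) ≤ v ⬝ᵥ v := by
  have hB : (Aᵀ * A).IsHermitian := by simpa using isHermitian_conjTranspose_mul_self A
  have := (posSemidef_one_sub_of_spectralRadius_le_one hB hρ).dotProduct_mulVec_nonneg v
  rw [sub_mulVec, one_mulVec, ← mulVec_mulVec, dotProduct_sub, dotProduct_transpose_mulVec] at this
  simpa [dotProduct_comm] using this

lemma dotProduct_transpose_mulVec_self_le (hρ : spectralRadius ℝ (Aᵀ * A) ≤ 1) (y : m → ℝ) :
    (Aᵀ *ᵥ y) ⬝ᵥ (Aᵀ *ᵥ y) ≤ y ⬝ᵥ y := by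
  have hyoung := two_mul_dotProduct_le y (A *ᵥ (Aᵀ *ᵥ y)) one_pos
  have hA := dotProduct_mulVec_self_le hρ (Aᵀ *ᵥ y)
  rw [← dotProduct_transpose_mulVec] at hyoung
  linarith

lemma dotProduct_self_add_transpose_mulVec_le (hρ : spectralRadius ℝ (Aᵀ * A) ≤ 1)
    (v : n → ℝ) (y : m → ℝ) :
    (v + Aᵀ *ᵥ (A *ᵥ v + y)) ⬝ᵥ (v + Aᵀ *ᵥ (A *ᵥ v + y)) ≤ 6 * (v ⬝ᵥ v) + 4 * (y ⬝ᵥ y) := by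
  have h₁ := add_dotProduct_add_self_le v (Aᵀ *ᵥ (A *ᵥ v + y))
  have h₂ := dotProduct_transpose_mulVec_self_le hρ (A *ᵥ v + y)
  have h₃ := add_dotProduct_add_self_le (A *ᵥ v) y
  have h₄ := dotProduct_mulVec_self_le hρ v
  linarith

end Contraction

lemma nonpos_of_forall_mul_le_sq_mul {γ C δ : ℝ} (hδ : 0 < δ)
    (h : ∀ t ∈ Set.Ioc 0 δ, t * γ ≤ t ^ 2 * C) : γ ≤ 0 := by
  refine ge_of_tendsto (x := 𝓝[>] 0) (f := fun t => t * C) ?_ ?_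
  · exact ((continuous_mul_const C).tendsto' 0 0 (zero_mul C)).mono_left nhdsWithin_le_nhds
  · filter_upwards [Ioc_mem_nhdsGT hδ] with t ht
    have := h t ht
    rw [sq, mul_assoc] at this
    exact le_of_mul_le_mul_left this ht.1
section Saddle
variable {n m : ℕ} {A : Matrix (Fin m) (Fin n) ℝ} {b : Fin m → ℝ} {c : Fin n → ℝ} {K : ℝ}
  {xb : Fin n → ℝ} {zb : Fin m → ℝ}

lemma fmap_eq_fmap_sub (A : Matrix (Fin m) (Fin n) ℝ) (b : Fin m → ℝ) (c : Fin n → ℝ)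
    (x x' : Fin n → ℝ) (z z' : Fin m → ℝ) :
    fmap A b c x z = fmap A b c x' z' - ((x - x') + Aᵀ *ᵥ (A *ᵥ (x - x') + (z - z'))) := by
  simp only [fmap, mulVec_sub, mulVec_add]
  abel

lemma LK_add_single (hAxb : A *ᵥ xb = b) {i : Fin n} {t : ℝ} (hxbi : 0 ≤ xb i)
    (ht : 0 ≤ xb i + t) :
    LK A b c K (xb + Pi.single i t) zb
      = LK A b c K xb zb - t * fmap A b c xb zb i + t ^ 2 * ((1 + Aᵀ i ⬝ᵥ Aᵀ i) / 2) := by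
  have hres : A *ᵥ (xb + Pi.single i t) - b = t • Aᵀ i := by
    rw [mulVec_add, hAxb, add_sub_cancel_left]
    ext j
    simp [mulVec_single, mul_comm]
  have hpen : ∑ j, max 0 (-(xb + Pi.single i t : Fin n → ℝ) j) = ∑ j, max 0 (-xb j) := by
    refine Finset.sum_congr rfl fun j _ => ?_
    rcases eq_or_ne j i with rfl | hj
    · simp [hxbi]
      linarith
    · simp [hj]
  have hcol : (Aᵀ *ᵥ zb) i = zb ⬝ᵥ Aᵀ i := dotProduct_comm _ _
  unfold LK
  rw [hres, hpen]
  simp only [fmap, hAxb, sub_self, Pi.single_eq_same, dotProduct_zero, mulVec_zero, Pi.sub_apply,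
    Pi.neg_apply, Pi.add_apply, Pi.zero_apply, hcol, dotProduct_add, add_dotProduct,
    dotProduct_smul, smul_dotProduct, smul_eq_mul, dotProduct_single, single_dotProduct]
  ring

lemma mul_fmap_le_of_isSaddle (hsaddle : IsSaddle A b c K xb zb) (hAxb : A *ᵥ xb = b)
    (hxb : ∀ i, 0 ≤ xb i) {i : Fin n} {t : ℝ} (ht : 0 ≤ xb i + t) :
    t * fmap A b c xb zb i ≤ t ^ 2 * ((1 + Aᵀ i ⬝ᵥ Aᵀ i) / 2) := by
  have := (hsaddle (xb + Pi.single i t) zb).2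
  rw [LK_add_single hAxb (hxb i) ht] at this
  linarith

lemma fmap_nonpos_of_isSaddle (hsaddle : IsSaddle A b c K xb zb) (hAxb : A *ᵥ xb = b)
    (hxb : ∀ i, 0 ≤ xb i) (i : Fin n) : fmap A b c xb zb i ≤ 0 :=
  nonpos_of_forall_mul_le_sq_mul one_pos fun _ ht =>
    mul_fmap_le_of_isSaddle hsaddle hAxb hxb (by linarith [hxb i, ht.1])

lemma fmap_eq_zero_of_isSaddle (hsaddle : IsSaddle A b c K xb zb) (hAxb : A *ᵥ xb = b)
    (hxb : ∀ i, 0 ≤ xb i) {i : Fin n} (hi : 0 < xb i) : fmap A b c xb zb i = 0 := by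
  refine le_antisymm (fmap_nonpos_of_isSaddle hsaddle hAxb hxb i) ?_
  refine neg_nonpos.1 <|
    nonpos_of_forall_mul_le_sq_mul (C := (1 + Aᵀ i ⬝ᵥ Aᵀ i) / 2) hi fun t ht => ?_
  have := mul_fmap_le_of_isSaddle hsaddle hAxb hxb (t := -t) (by linarith [ht.2])
  rw [neg_sq] at this
  linarith

lemma dotProduct_fmap_nonpos_of_isSaddle (hsaddle : IsSaddle A b c K xb zb)
    (hAxb : A *ᵥ xb = b) (hxb : ∀ i, 0 ≤ xb i) {x : Fin n → ℝ} (hx : ∀ i, 0 ≤ x i) :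
    (x - xb) ⬝ᵥ fmap A b c xb zb ≤ 0 := by
  refine Finset.sum_nonpos fun i _ => ?_
  rcases (hxb i).eq_or_lt with hi | hi
  · simpa [← hi] using
      mul_nonpos_of_nonneg_of_nonpos (hx i) (fmap_nonpos_of_isSaddle hsaddle hAxb hxb i)
  · simp [fmap_eq_zero_of_isSaddle hsaddle hAxb hxb hi]

lemma lie_derivative_at_sample_le (hsaddle : IsSaddle A b c K xb zb) (hAxb : A *ᵥ xb = b)
    (hxb : ∀ i, 0 ≤ xb i) {xh : Fin n → ℝ} (zh : Fin m → ℝ) (hxh : ∀ i, 0 ≤ xh i) :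
    (xh - xb) ⬝ᵥ (sgm A b c xh zh).indicator (fmap A b c xh zh) + (zh - zb) ⬝ᵥ (A *ᵥ xh - b)
      ≤ -((A *ᵥ xh - b) ⬝ᵥ (A *ᵥ xh - b)) := by
  have hproj : (xh - xb) ⬝ᵥ (sgm A b c xh zh).indicator (fmap A b c xh zh)
      ≤ (xh - xb) ⬝ᵥ fmap A b c xh zh := dotProduct_indicator_le hxh hxb
  have hkkt := dotProduct_fmap_nonpos_of_isSaddle hsaddle hAxb hxb hxh
  have hres : A *ᵥ xh - b = A *ᵥ (xh - xb) := by rw [mulVec_sub, hAxb]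
  have hexpand : (xh - xb) ⬝ᵥ fmap A b c xh zh = (xh - xb) ⬝ᵥ fmap A b c xb zb
      - ((xh - xb) ⬝ᵥ (xh - xb) + (A *ᵥ xh - b) ⬝ᵥ (A *ᵥ xh - b)
        + (zh - zb) ⬝ᵥ (A *ᵥ xh - b)) := by
    rw [fmap_eq_fmap_sub A b c xh xb zh zb, dotProduct_sub, dotProduct_add,
      dotProduct_transpose_mulVec, add_dotProduct, hres, add_assoc]
  linarith [dotProduct_self_nonneg (xh - xb)]

end Saddle

section SamplingError
variable {m n : Type*} [Fintype m] [Fintype n]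

noncomputable def samplingError (A : Matrix m n ℝ) (S : Set n) (ex : n → ℝ) (ez : m → ℝ)
    (w : n → ℝ) (r : m → ℝ) : ℝ :=
  ex ⬝ᵥ w + ez ⬝ᵥ r + (A *ᵥ ex) ⬝ᵥ (A *ᵥ w)
    + (ex + Aᵀ *ᵥ (A *ᵥ ex + ez)) ⬝ᵥ S.indicator (w + Aᵀ *ᵥ (A *ᵥ w + r))

lemma samplingError_le [DecidableEq n] {A : Matrix m n ℝ} (hρ : spectralRadius ℝ (Aᵀ * A) ≤ 1)
    (S : Set n) (ex : n → ℝ) (ez : m → ℝ) (w : n → ℝ) (r : m → ℝ) :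
    samplingError A S ex ez w r
      ≤ 40 * (ex ⬝ᵥ ex) + 20 * (ez ⬝ᵥ ez) + (w ⬝ᵥ w + (A *ᵥ w) ⬝ᵥ (A *ᵥ w) + r ⬝ᵥ r) / 2 := by
  set G := ex + Aᵀ *ᵥ (A *ᵥ ex + ez)
  set u := S.indicator (w + Aᵀ *ᵥ (A *ᵥ w + r))
  -- Young's weights 4, 2, 1, 8 leave `26.5 |ex|² + 17 |ez|²`, within `40 |ex|² + 20 |ez|²`.
  have hw := two_mul_dotProduct_le ex w (ε := 4) (by norm_num)
  have hr := two_mul_dotProduct_le ez r (ε := 2) (by norm_num)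
  have hAw := two_mul_dotProduct_le (A *ᵥ ex) (A *ᵥ w) one_pos
  have hGu := two_mul_dotProduct_le G u (ε := 8) (by norm_num)
  norm_num at hw hr hAw hGu
  have hAex := dotProduct_mulVec_self_le hρ ex
  have hG := dotProduct_self_add_transpose_mulVec_le hρ ex ez
  have hu :=
    (indicator_dotProduct_self_le S _).trans (dotProduct_self_add_transpose_mulVec_le hρ w r)
  have hex := dotProduct_self_nonneg ex
  have hez := dotProduct_self_nonneg ez
  unfold samplingError
  linarith

end SamplingError

section Decomposition
variable {n m : ℕ} {A : Matrix (Fin m) (Fin n) ℝ} {b : Fin m → ℝ} {c : Fin n → ℝ}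

lemma lie_derivative_eq_add_samplingError {S : Set (Fin n)} {xh x xb w : Fin n → ℝ}
    {zh z zb : Fin m → ℝ} {r : Fin m → ℝ} (hw : S.indicator (fmap A b c xh zh) = w)
    (hr : A *ᵥ xh - b = r) :
    (x - xb) ⬝ᵥ w + (z - zb) ⬝ᵥ r - fmap A b c x z ⬝ᵥ S.indicator ((Aᵀ * A + 1) *ᵥ w)
        - fmap A b c x z ⬝ᵥ S.indicator (Aᵀ *ᵥ r) + (A *ᵥ x - b) ⬝ᵥ (A *ᵥ w)
      = (xh - xb) ⬝ᵥ w + (zh - zb) ⬝ᵥ r - (w ⬝ᵥ w + (A *ᵥ w) ⬝ᵥ (A *ᵥ w))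
        + samplingError A S (x - xh) (z - zh) w r := by
  set u := w + Aᵀ *ᵥ (A *ᵥ w + r)
  have hu : fmap A b c x z ⬝ᵥ S.indicator ((Aᵀ * A + 1) *ᵥ w)
      + fmap A b c x z ⬝ᵥ S.indicator (Aᵀ *ᵥ r) = fmap A b c x z ⬝ᵥ S.indicator u := by
    rw [← dotProduct_add, ← Set.indicator_add', add_mulVec, one_mulVec, ← mulVec_mulVec]
    simp only [u, mulVec_add]
    abel_nf
  have hfu : fmap A b c x z ⬝ᵥ S.indicator u
      = w ⬝ᵥ w + (A *ᵥ w) ⬝ᵥ (A *ᵥ w) + r ⬝ᵥ (A *ᵥ w)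
        - (x - xh + Aᵀ *ᵥ (A *ᵥ (x - xh) + (z - zh))) ⬝ᵥ S.indicator u := by
    rw [fmap_eq_fmap_sub A b c x xh z zh, sub_dotProduct, dotProduct_indicator, hw,
      dotProduct_add, dotProduct_transpose_mulVec, add_dotProduct, add_assoc]
  have hx : (x - xb) ⬝ᵥ w = (x - xh) ⬝ᵥ w + (xh - xb) ⬝ᵥ w := by
    rw [← add_dotProduct, sub_add_sub_cancel]
  have hz : (z - zb) ⬝ᵥ r = (z - zh) ⬝ᵥ r + (zh - zb) ⬝ᵥ r := by
    rw [← add_dotProduct, sub_add_sub_cancel]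
  have hAx : (A *ᵥ x - b) ⬝ᵥ (A *ᵥ w) = (A *ᵥ (x - xh)) ⬝ᵥ (A *ᵥ w) + r ⬝ᵥ (A *ᵥ w) := by
    rw [← add_dotProduct, ← hr, mulVec_sub, sub_add_sub_cancel]
  unfold samplingError
  linarith

end Decomposition

theorem lie_derivative_V_decrease_general (n m : ℕ) (c : Fin n → ℝ) (b : Fin m → ℝ)
    (A : Matrix (Fin m) (Fin n) ℝ)
    (hρ : spectralRadius ℝ (Aᵀ * A) ≤ 1)
    (xh : Fin n → ℝ) (zh : Fin m → ℝ) (K : ℝ)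
    (hxh : ∀ i, 0 ≤ xh i)
    (xb : Fin n → ℝ) (zb : Fin m → ℝ)
    (hsaddle : IsSaddle A b c K xb zb)
    (hAxb : A *ᵥ xb = b) (hxb : ∀ i, 0 ≤ xb i)
    (x : Fin n → ℝ) (z : Fin m → ℝ)
    (htrig : 40 * ((x - xh) ⬝ᵥ (x - xh)) + 20 * ((z - zh) ⬝ᵥ (z - zh))
      ≤ (1 / 4) * (fmap A b c xh zh ⬝ᵥ (ISet (sgm A b c xh zh) *ᵥ fmap A b c xh zh))
        + (1 / 8) * ((A *ᵥ xh - b) ⬝ᵥ (A *ᵥ xh - b))) :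
    ((x - xb) ⬝ᵥ (ISet (sgm A b c xh zh) *ᵥ fmap A b c xh zh)
      + (z - zb) ⬝ᵥ (A *ᵥ xh - b)
      - fmap A b c x z ⬝ᵥ (ISet (sgm A b c xh zh) *ᵥ
          ((Aᵀ * A + 1) *ᵥ (ISet (sgm A b c xh zh) *ᵥ fmap A b c xh zh)))
      - fmap A b c x z ⬝ᵥ (ISet (sgm A b c xh zh) *ᵥ (Aᵀ *ᵥ (A *ᵥ xh - b)))
      + (A *ᵥ x - b) ⬝ᵥ (A *ᵥ (ISet (sgm A b c xh zh) *ᵥ fmap A b c xh zh))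
    ≤ -(1 / 4) * (fmap A b c xh zh ⬝ᵥ (ISet (sgm A b c xh zh) *ᵥ fmap A b c xh zh))
      - (1 / 8) * ((A *ᵥ xh - b) ⬝ᵥ (A *ᵥ xh - b)))
    ∧
    (-(1 / 4) * (fmap A b c xh zh ⬝ᵥ (ISet (sgm A b c xh zh) *ᵥ fmap A b c xh zh))
      - (1 / 8) * ((A *ᵥ xh - b) ⬝ᵥ (A *ᵥ xh - b)) ≤ 0) := by
  simp only [ISet_mulVec] at htrig ⊢
  have hnominal := lie_derivative_at_sample_le hsaddle hAxb hxb zh hxh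
  rw [dotProduct_indicator_self] at htrig ⊢
  set w := (sgm A b c xh zh).indicator (fmap A b c xh zh) with hw
  set r := A *ᵥ xh - b with hr
  rw [lie_derivative_eq_add_samplingError hw.symm hr.symm]
  have herror := samplingError_le hρ (sgm A b c xh zh) (x - xh) (z - zh) w r
  have hw₀ := dotProduct_self_nonneg w
  have hr₀ := dotProduct_self_nonneg r
  have hAw₀ := dotProduct_self_nonneg (A *ᵥ w)
  constructor <;> linarith

/-- When the modes agree (σ(x,z) = σ(x̂,ẑ) = p̂) and the trigger inequality
40 e_xᵀe_x + 20 e_zᵀe_z ≤ ¼ f̂ᵀI_{p̂}f̂ + ⅛ r̂ᵀr̂ holds, the Lie derivative of the Lyapunov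
function is bounded by −¼ f̂ᵀI_{p̂}f̂ − ⅛ r̂ᵀr̂ ≤ 0. -/
theorem lie_derivative_V_decrease (n m : ℕ) (c : Fin n → ℝ) (b : Fin m → ℝ)
    (A : Matrix (Fin m) (Fin n) ℝ)
    (hρ : spectralRadius ℝ (Aᵀ * A) ≤ 1)
    (xh : Fin n → ℝ) (zh : Fin m → ℝ) (K : ℝ)
    (hxh : ∀ i, 0 ≤ xh i)
    (hK : ‖fmap A b c xh zh‖ ≤ K)
    (xb : Fin n → ℝ) (zb : Fin m → ℝ)
    (hsaddle : IsSaddle A b c K xb zb)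
    (hAxb : A *ᵥ xb = b) (hxb : ∀ i, 0 ≤ xb i)
    (x : Fin n → ℝ) (z : Fin m → ℝ)
    (hmode : sgm A b c x z = sgm A b c xh zh)
    (htrig : 40 * ((x - xh) ⬝ᵥ (x - xh)) + 20 * ((z - zh) ⬝ᵥ (z - zh))
      ≤ (1 / 4) * (fmap A b c xh zh ⬝ᵥ (ISet (sgm A b c xh zh) *ᵥ fmap A b c xh zh))
        + (1 / 8) * ((A *ᵥ xh - b) ⬝ᵥ (A *ᵥ xh - b))) :
    ((x - xb) ⬝ᵥ (ISet (sgm A b c xh zh) *ᵥ fmap A b c xh zh)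
      + (z - zb) ⬝ᵥ (A *ᵥ xh - b)
      - fmap A b c x z ⬝ᵥ (ISet (sgm A b c xh zh) *ᵥ
          ((Aᵀ * A + 1) *ᵥ (ISet (sgm A b c xh zh) *ᵥ fmap A b c xh zh)))
      - fmap A b c x z ⬝ᵥ (ISet (sgm A b c xh zh) *ᵥ (Aᵀ *ᵥ (A *ᵥ xh - b)))
      + (A *ᵥ x - b) ⬝ᵥ (A *ᵥ (ISet (sgm A b c xh zh) *ᵥ fmap A b c xh zh))
    ≤ -(1 / 4) * (fmap A b c xh zh ⬝ᵥ (ISet (sgm A b c xh zh) *ᵥ fmap A b c xh zh))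
      - (1 / 8) * ((A *ᵥ xh - b) ⬝ᵥ (A *ᵥ xh - b)))
    ∧
    (-(1 / 4) * (fmap A b c xh zh ⬝ᵥ (ISet (sgm A b c xh zh) *ᵥ fmap A b c xh zh))
      - (1 / 8) * ((A *ᵥ xh - b) ⬝ᵥ (A *ᵥ xh - b)) ≤ 0) :=
  lie_derivative_V_decrease_general n m c b A hρ xh zh K hxh xb zb hsaddle hAxb hxb x z htrig
end

section
/- Let A ∈ ℝ^{m×n} with spectral radius ρ(AᵀA) ≤ 1, and let D ∈ ℝ^{n×n} be a diagonal matrix whose diagonal entries all lie in {0,1}. Then for every u ∈ ℝᵐ, v ∈ ℝⁿ, and κ > 0: uᵀ A D AᵀA D v ≤ (1/(2κ)) uᵀu + (κ/2) vᵀ D v. -/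
/-!
By Young's inequality it suffices to show `‖A D AᵀA D v‖² ≤ vᵀ D v`. The bound `ρ(AᵀA) ≤ 1`
makes `A` a contraction for the Euclidean norm (`AᵀA ≤ 1` in the Loewner order), hence so is
`AᵀA`; a `0/1` diagonal `D` is a contraction with `‖D v‖² = vᵀ D v`.
-/

open Matrix
open scoped MatrixOrder

variable {m n : Type*} [Fintype m] [Fintype n]

theorem Matrix.dotProduct_le_young (u w : n → ℝ) {κ : ℝ} (hκ : 0 < κ) :
    u ⬝ᵥ w ≤ 1 / (2 * κ) * (u ⬝ᵥ u) + κ / 2 * (w ⬝ᵥ w) := by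
  simp only [dotProduct, Finset.mul_sum, ← Finset.sum_add_distrib]
  refine Finset.sum_le_sum fun i _ => ?_
  have hsq : 0 ≤ (u i - κ * w i) ^ 2 / κ := by positivity
  field_simp
  nlinarith [hsq, mul_div_cancel_left₀ ((u i - κ * w i) ^ 2) hκ.ne']

theorem Matrix.IsHermitian.le_one_of_spectralRadius_le_one [DecidableEq n] {S : Matrix n n ℝ}
    (hS : S.IsHermitian) (hρ : spectralRadius ℝ S ≤ 1) : S ≤ 1 := by
  refine CFC.le_one (R := ℝ) (fun x hx => ?_) hS.isSelfAdjoint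
  have hx : (‖x‖₊ : ENNReal) ≤ 1 :=
    (le_iSup₂ (f := fun k (_ : k ∈ spectrum ℝ S) => (‖k‖₊ : ENNReal)) x hx).trans hρ
  have : ‖x‖ ≤ 1 := by exact_mod_cast hx
  exact (le_abs_self x).trans (by simpa [Real.norm_eq_abs] using this)

theorem Matrix.dotProduct_mulVec_le_of_le_one [DecidableEq n] {S : Matrix n n ℝ} (h : S ≤ 1)
    (x : n → ℝ) : x ⬝ᵥ (S *ᵥ x) ≤ x ⬝ᵥ x := by
  have := (Matrix.le_iff.mp h).dotProduct_mulVec_nonneg x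
  simpa only [sub_mulVec, one_mulVec, dotProduct_sub, star_trivial, sub_nonneg] using this

theorem Matrix.mulVec_dotProduct_mulVec_le_of_spectralRadius_le_one [DecidableEq n]
    (A : Matrix m n ℝ) (hρ : spectralRadius ℝ (Aᵀ * A) ≤ 1) (x : n → ℝ) :
    (A *ᵥ x) ⬝ᵥ (A *ᵥ x) ≤ x ⬝ᵥ x := by
  have hgram : (Aᵀ * A).IsHermitian := by
    simpa using isHermitian_conjTranspose_mul_self A
  calc (A *ᵥ x) ⬝ᵥ (A *ᵥ x) = x ⬝ᵥ ((Aᵀ * A) *ᵥ x) := by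
        rw [← mulVec_mulVec, mulVec_transpose, dotProduct_mulVec, dotProduct_comm]
    _ ≤ x ⬝ᵥ x :=
      dotProduct_mulVec_le_of_le_one (hgram.le_one_of_spectralRadius_le_one hρ) x

/-- `‖y‖² = ⟪A x, A y⟫` for `y = AᵀA x`; Young's inequality with `κ = 1` and the contractivity of
`A` then give `‖y‖² ≤ ‖A x‖²`. -/
theorem Matrix.transpose_mulVec_mulVec_dotProduct_le {A : Matrix m n ℝ}
    (hA : ∀ x, (A *ᵥ x) ⬝ᵥ (A *ᵥ x) ≤ x ⬝ᵥ x) (x : n → ℝ) :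
    (Aᵀ *ᵥ (A *ᵥ x)) ⬝ᵥ (Aᵀ *ᵥ (A *ᵥ x)) ≤ x ⬝ᵥ x := by
  set y := Aᵀ *ᵥ (A *ᵥ x)
  have hy : y ⬝ᵥ y = (A *ᵥ x) ⬝ᵥ (A *ᵥ y) := by
    show (Aᵀ *ᵥ (A *ᵥ x)) ⬝ᵥ y = _
    rw [mulVec_transpose, ← dotProduct_mulVec]
  have := dotProduct_le_young (A *ᵥ x) (A *ᵥ y) one_pos
  linarith [hA x, hA y]

section ZeroOneDiagonal

variable [DecidableEq n] {d : n → ℝ}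

theorem Matrix.diagonal_mulVec_dotProduct_self (hd : ∀ i, d i = 0 ∨ d i = 1) (x : n → ℝ) :
    (diagonal d *ᵥ x) ⬝ᵥ (diagonal d *ᵥ x) = x ⬝ᵥ (diagonal d *ᵥ x) := by
  simp only [dotProduct, mulVec_diagonal]
  refine Finset.sum_congr rfl fun i _ => ?_
  rcases hd i with h | h <;> simp [h]

theorem Matrix.diagonal_mulVec_dotProduct_le (hd : ∀ i, d i = 0 ∨ d i = 1) (x : n → ℝ) :
    (diagonal d *ᵥ x) ⬝ᵥ (diagonal d *ᵥ x) ≤ x ⬝ᵥ x := by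
  simp only [dotProduct, mulVec_diagonal]
  refine Finset.sum_le_sum fun i _ => ?_
  rcases hd i with h | h <;> simp [h, mul_self_nonneg]

end ZeroOneDiagonal

/-- Young-type cross-term bound: for A with ρ(AᵀA) ≤ 1, D diagonal 0/1,
u ∈ ℝᵐ, v ∈ ℝⁿ, and κ > 0: uᵀ A D AᵀA D v ≤ (1/(2κ)) uᵀu + (κ/2) vᵀDv. -/
theorem young_cross_term_bound (n m : ℕ) (A : Matrix (Fin m) (Fin n) ℝ)
    (hρ : spectralRadius ℝ (Aᵀ * A) ≤ 1)
    (d : Fin n → ℝ) (hd : ∀ i, d i = 0 ∨ d i = 1)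
    (D : Matrix (Fin n) (Fin n) ℝ) (hD : D = Matrix.diagonal d) :
    ∀ (u : Fin m → ℝ) (v : Fin n → ℝ) (κ : ℝ), 0 < κ →
      u ⬝ᵥ ((A * D * Aᵀ * A * D) *ᵥ v)
        ≤ (1 / (2 * κ)) * (u ⬝ᵥ u) + (κ / 2) * (v ⬝ᵥ (D *ᵥ v)) := by
  intro u v κ hκ
  subst hD
  have hA := mulVec_dotProduct_mulVec_le_of_spectralRadius_le_one A hρ
  set y := diagonal d *ᵥ v
  set w := diagonal d *ᵥ (Aᵀ *ᵥ (A *ᵥ y))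
  have hw : (A * diagonal d * Aᵀ * A * diagonal d) *ᵥ v = A *ᵥ w := by
    simp only [w, y, mulVec_mulVec, Matrix.mul_assoc]
  have hAw : (A *ᵥ w) ⬝ᵥ (A *ᵥ w) ≤ v ⬝ᵥ y :=
    calc (A *ᵥ w) ⬝ᵥ (A *ᵥ w) ≤ w ⬝ᵥ w := hA w
      _ ≤ (Aᵀ *ᵥ (A *ᵥ y)) ⬝ᵥ (Aᵀ *ᵥ (A *ᵥ y)) := diagonal_mulVec_dotProduct_le hd _
      _ ≤ y ⬝ᵥ y := transpose_mulVec_mulVec_dotProduct_le hA y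
      _ = v ⬝ᵥ y := diagonal_mulVec_dotProduct_self hd v
  calc u ⬝ᵥ ((A * diagonal d * Aᵀ * A * diagonal d) *ᵥ v)
      ≤ 1 / (2 * κ) * (u ⬝ᵥ u) + κ / 2 * ((A *ᵥ w) ⬝ᵥ (A *ᵥ w)) :=
        hw ▸ dotProduct_le_young u _ hκ
    _ ≤ 1 / (2 * κ) * (u ⬝ᵥ u) + κ / 2 * (v ⬝ᵥ y) := by gcongr
end

section
/- Let S ⊆ {1,…,n}, let x, x̂ ∈ ℝⁿ, z, ẑ ∈ ℝᵐ, and set p̂ = σ(x̂,ẑ). Suppose that for each i ∈ S, f_i(x,z)² ≤ (1/(120·|N_i|·max_{j ∈ N_i}|N_j|))·( f(x̂,ẑ)ᵀ I_{p̂ ∩ N_i^x} f(x̂,ẑ) + (Ax̂ − b)ᵀ I_{N_i^z} (Ax̂ − b) ). Then f(x,z)ᵀ I_S f(x,z) = Σ_{i∈S} f_i(x,z)² ≤ (1/120)·( f(x̂,ẑ)ᵀ I_{p̂} f(x̂,ẑ) + (Ax̂ − b)ᵀ(Ax̂ − b) ). -/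
/-! Write `wᵢ` for the weight `1 / (|Nᵢ| · max_{j ∈ Nᵢ} |Nⱼ|)`. Summing the per-agent bounds and
exchanging the order of summation, each entry `f̂ⱼ²` (resp. `(Ax̂ - b)_ℓ²`) collects the weights of
those `i ∈ S` that are mutual neighbours of `j` (resp. of the virtual agent `n + ℓ`). Every such `i`
lies in the neighbourhood `N_v` of that agent `v`, so there are at most `|N_v|` of them, and each
has `wᵢ ≤ 1 / |N_v|` because `v ∈ Nᵢ`; hence the weights collected by any entry add up to at most 1. -/

open Matrix BigOperators

/-- x-neighbor set of agent i: N_i^x = {j : (AᵀA)_{ij} ≠ 0} ∪ {i}. -/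
def Nx {n m : ℕ} (A : Matrix (Fin m) (Fin n) ℝ) (i : Fin n) : Set (Fin n) :=
  {j | (Aᵀ * A) i j ≠ 0} ∪ {i}

/-- z-neighbor set of agent i: N_i^z = {ℓ : a_{ℓ,i} ≠ 0}. -/
def Nz {n m : ℕ} (A : Matrix (Fin m) (Fin n) ℝ) (i : Fin n) : Set (Fin m) :=
  {ℓ | A ℓ i ≠ 0}

-- Full neighbor set of an agent (`Sum.inl i` is real agent i, `Sum.inr ℓ` is virtual
-- agent n+ℓ): N_i = N_i^x ∪ {n+ℓ : ℓ ∈ N_i^z} and N_{n+ℓ} = {j : a_{ℓ,j} ≠ 0} ∪ {n+ℓ}.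
open Classical in
noncomputable def Nbhd {n m : ℕ} (A : Matrix (Fin m) (Fin n) ℝ) :
    Fin n ⊕ Fin m → Finset (Fin n ⊕ Fin m)
  | Sum.inl i =>
      ((Finset.univ.filter fun j : Fin n => (Aᵀ * A) i j ≠ 0).image Sum.inl
        ∪ {Sum.inl i})
      ∪ (Finset.univ.filter fun ℓ : Fin m => A ℓ i ≠ 0).image Sum.inr
  | Sum.inr ℓ =>
      (Finset.univ.filter fun j : Fin n => A ℓ j ≠ 0).image Sum.inl ∪ {Sum.inr ℓ}

noncomputable def neighborWeight {κ : Type*} (N : κ → Finset κ) (u : κ) : ℝ :=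
  1 / ((N u).card * ((N u).sup fun j => (N j).card : ℕ))

theorem sum_neighborWeight_le_one {ι κ : Type*} (N : κ → Finset κ) {e : ι → κ}
    (he : Function.Injective e) (v : κ) (T : Finset ι)
    (hT : ∀ i ∈ T, e i ∈ N v ∧ v ∈ N (e i)) :
    ∑ i ∈ T, neighborWeight N (e i) ≤ 1 := by
  rcases T.eq_empty_or_nonempty with rfl | ⟨i₀, hi₀⟩
  · simp
  have hv_pos : (0 : ℝ) < (N v).card := by
    exact_mod_cast Finset.card_pos.mpr ⟨_, (hT i₀ hi₀).1⟩
  have hterm : ∀ i ∈ T, neighborWeight N (e i) ≤ 1 / (N v).card := by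
    intro i hi
    have hcard : 1 ≤ (N (e i)).card := Finset.card_pos.mpr ⟨_, (hT i hi).2⟩
    have hsup : (N v).card ≤ (N (e i)).sup fun j => (N j).card :=
      Finset.le_sup (f := fun j => (N j).card) (hT i hi).2
    refine one_div_le_one_div_of_le hv_pos ?_
    exact_mod_cast hsup.trans (Nat.le_mul_of_pos_left _ hcard)
  have hT_card : T.card ≤ (N v).card :=
    Finset.card_le_card_of_injOn e (fun i hi => (hT i hi).1) he.injOn
  calc ∑ i ∈ T, neighborWeight N (e i) ≤ ∑ _i ∈ T, 1 / ((N v).card : ℝ) :=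
        Finset.sum_le_sum hterm
    _ = T.card / (N v).card := by rw [Finset.sum_const, nsmul_eq_mul, mul_one_div]
    _ ≤ 1 := (div_le_one hv_pos).mpr (by exact_mod_cast hT_card)

open Classical in
theorem sum_mul_sum_indicator_le {ι κ : Type*} [Fintype κ] (S : Finset ι) (w : ι → ℝ)
    (T : ι → Set κ) {q : κ → ℝ} (hq : 0 ≤ q) {C : ℝ}
    (hcol : ∀ k, ∑ i ∈ S with k ∈ T i, w i ≤ C) :
    ∑ i ∈ S, w i * ∑ k, (T i).indicator q k ≤ C * ∑ k, q k := by
  calc ∑ i ∈ S, w i * ∑ k, (T i).indicator q k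
      = ∑ k, (∑ i ∈ S with k ∈ T i, w i) * q k := by
        simp only [Finset.mul_sum, Finset.sum_mul, Finset.sum_filter, Set.indicator_apply]
        rw [Finset.sum_comm]
        refine Finset.sum_congr rfl fun k _ => Finset.sum_congr rfl fun i _ => ?_
        split_ifs <;> simp
    _ ≤ ∑ k, C * q k := Finset.sum_le_sum fun k _ => mul_le_mul_of_nonneg_right (hcol k) (hq k)
    _ = C * ∑ k, q k := (Finset.mul_sum _ _ _).symm

theorem dotProduct_ISet_mulVec {ι : Type*} [Fintype ι] [DecidableEq ι] (T : Set ι)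
    (v : ι → ℝ) : v ⬝ᵥ (ISet T *ᵥ v) = ∑ j, T.indicator (fun j => v j ^ 2) j := by
  classical
  simp only [dotProduct, ISet, mulVec_diagonal, Set.indicator_apply]
  refine Finset.sum_congr rfl fun j _ => ?_
  split_ifs <;> ring

section Nbhd

variable {n m : ℕ} (A : Matrix (Fin m) (Fin n) ℝ)

theorem mutual_mem_Nbhd_of_mem_Nx {i j : Fin n} (h : j ∈ Nx A i) :
    Sum.inl i ∈ Nbhd A (Sum.inl j) ∧ Sum.inl j ∈ Nbhd A (Sum.inl i) := by
  rcases h with h | rfl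
  · replace h : (Aᵀ * A) i j ≠ 0 := h
    have h' : (Aᵀ * A) j i ≠ 0 := by simpa only [mul_apply, transpose_apply, mul_comm] using h
    exact ⟨by simp [Nbhd, h'], by simp [Nbhd, h]⟩
  · simp [Nbhd]

theorem mutual_mem_Nbhd_of_mem_Nz {i : Fin n} {ℓ : Fin m} (h : ℓ ∈ Nz A i) :
    Sum.inl i ∈ Nbhd A (Sum.inr ℓ) ∧ Sum.inr ℓ ∈ Nbhd A (Sum.inl i) := by
  replace h : A ℓ i ≠ 0 := h
  exact ⟨by simp [Nbhd, h], by simp [Nbhd, h]⟩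

end Nbhd

/-- Aggregation of the per-agent mode-mismatch bounds: if for each i ∈ S,
f_i(x,z)² ≤ (1/(120|N_i|·max_{j∈N_i}|N_j|))·(f̂ᵀI_{p̂∩N_i^x}f̂ + (Ax̂−b)ᵀI_{N_i^z}(Ax̂−b)),
then f(x,z)ᵀI_S f(x,z) = Σ_{i∈S} f_i(x,z)² ≤ (1/120)(f̂ᵀI_{p̂}f̂ + (Ax̂−b)ᵀ(Ax̂−b)). -/
theorem aggregated_mismatch_bound (n m : ℕ) (c : Fin n → ℝ) (b : Fin m → ℝ)
    (A : Matrix (Fin m) (Fin n) ℝ)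
    (S : Finset (Fin n))
    (x xh : Fin n → ℝ) (z zh : Fin m → ℝ)
    (hyp : ∀ i ∈ S,
      (fmap A b c x z i) ^ 2
        ≤ (1 / (120 * ((Nbhd A (Sum.inl i)).card : ℝ) *
              (((Nbhd A (Sum.inl i)).sup fun j => (Nbhd A j).card : ℕ) : ℝ))) *
          (fmap A b c xh zh ⬝ᵥ (ISet (sgm A b c xh zh ∩ Nx A i) *ᵥ fmap A b c xh zh)
            + (A *ᵥ xh - b) ⬝ᵥ (ISet (Nz A i) *ᵥ (A *ᵥ xh - b)))) :
    fmap A b c x z ⬝ᵥ (ISet (↑S : Set (Fin n)) *ᵥ fmap A b c x z)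
      = ∑ i ∈ S, (fmap A b c x z i) ^ 2 ∧
    fmap A b c x z ⬝ᵥ (ISet (↑S : Set (Fin n)) *ᵥ fmap A b c x z)
      ≤ (1 / 120) *
        (fmap A b c xh zh ⬝ᵥ (ISet (sgm A b c xh zh) *ᵥ fmap A b c xh zh)
          + (A *ᵥ xh - b) ⬝ᵥ (A *ᵥ xh - b)) := by
  classical
  set f := fmap A b c x z
  set g := fmap A b c xh zh
  set r := A *ᵥ xh - b
  set p := sgm A b c xh zh
  set w : Fin n → ℝ := fun i => neighborWeight (Nbhd A) (Sum.inl i)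
  have hsum : f ⬝ᵥ (ISet (↑S : Set (Fin n)) *ᵥ f) = ∑ i ∈ S, f i ^ 2 := by
    rw [dotProduct_ISet_mulVec, Finset.sum_indicator_subset _ S.subset_univ]
  refine ⟨hsum, ?_⟩
  calc f ⬝ᵥ (ISet (↑S : Set (Fin n)) *ᵥ f) = ∑ i ∈ S, f i ^ 2 := hsum
    _ ≤ 1 / 120 * (∑ i ∈ S, w i * ∑ j, (Nx A i).indicator (p.indicator (g · ^ 2)) j
          + ∑ i ∈ S, w i * ∑ ℓ, (Nz A i).indicator (r · ^ 2) ℓ) := by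
        rw [← Finset.sum_add_distrib, Finset.mul_sum]
        refine Finset.sum_le_sum fun i hi => (hyp i hi).trans_eq ?_
        rw [dotProduct_ISet_mulVec, dotProduct_ISet_mulVec, Set.indicator_indicator,
          Set.inter_comm]
        simp only [w, neighborWeight]
        ring
    _ ≤ 1 / 120 * (1 * ∑ j, p.indicator (g · ^ 2) j + 1 * ∑ ℓ, r ℓ ^ 2) := by
        gcongr 1 / 120 * (?_ + ?_)
        · exact sum_mul_sum_indicator_le S w _ (Set.indicator_nonneg fun j _ => sq_nonneg (g j))
            fun j => sum_neighborWeight_le_one _ Sum.inl_injective (Sum.inl j) _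
              fun i hi => mutual_mem_Nbhd_of_mem_Nx A (Finset.mem_filter.mp hi).2
        · exact sum_mul_sum_indicator_le S w _ (fun ℓ => sq_nonneg (r ℓ))
            fun ℓ => sum_neighborWeight_le_one _ Sum.inl_injective (Sum.inr ℓ) _
              fun i hi => mutual_mem_Nbhd_of_mem_Nz A (Finset.mem_filter.mp hi).2
    _ = _ := by
        rw [dotProduct_ISet_mulVec]
        simp only [dotProduct, one_mul, sq]
end

section
/- Assume ρ(AᵀA) ≤ 1, x̂ ∈ ℝⁿ with x̂ ≥ 0, ẑ ∈ ℝᵐ, K ≥ ‖f(x̂,ẑ)‖_∞, and (x̄,z̄) is a saddle point of L^K with Ax̄ = b and x̄ ≥ 0. Let x ∈ ℝⁿ, z ∈ ℝᵐ, set p = σ(x,z), p̂ = σ(x̂,ẑ), e_x = x − x̂, e_z = z − ẑ, and assume: (a) p̂ ⊆ p; (b) for each i ∈ p̂, (e_x)_i² ≤ μ_i f_i(x̂,ẑ)² with 0 < μ_i ≤ 1/160, and (e_x)_i = 0 for i ∉ p̂; (c) for each ℓ ∈ {1,…,m}, (e_z)_ℓ² ≤ μ_{n+ℓ}(a_ℓᵀx̂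 − b_ℓ)² with 0 < μ_{n+ℓ} ≤ 1/160; (d) f(x,z)ᵀ I_{p∖p̂} f(x,z) ≤ (1/120)·( f(x̂,ẑ)ᵀ I_{p̂} f(x̂,ẑ) + (Ax̂ − b)ᵀ(Ax̂ − b) ). Then (x − x̄)ᵀ I_{p̂} f(x̂,ẑ) + (z − z̄)ᵀ(Ax̂ − b) − f(x,z)ᵀ I_p (AᵀA + I) I_{p̂} f(x̂,ẑ) − f(x,z)ᵀ I_p Aᵀ(Ax̂ − b) + (Ax − b)ᵀ A I_{p̂} f(x̂,ẑ) ≤ −⅛ f(x̂,ẑ)ᵀ I_{p̂} f(x̂,ẑ). -/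
open Matrix BigOperators

/-!
Write `u = I_p̂ f̂`, `g = A x̂ - b`, `e_x = x - x̂`, `e_z = z - ẑ`. The saddle inequality
`L^K(x̄, z̄) ≤ L^K(x̂, z̄)` and the sign pattern off `p̂` (there `x̂ᵢ = 0` and `f̂ᵢ < 0`) give
`(x̂ - x̄)ᵀu + (ẑ - z̄)ᵀg ≤ -½|g|²`. Since `ρ(AᵀA) ≤ 1`, both `A` and `Aᵀ` are contractions, so
the triggers bound `|e_x|²`, `|e_z|²` and, through `f̂ - f = AᵀA e_x + e_x + Aᵀ e_z`, the mode
mismatch `I_p f - u` by small multiples of `|u|² + |g|²`. Young's inequality then absorbs the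
remaining cross terms into `-|u|² - ½|g|²`, leaving `-⅛|u|²`.
-/

section DotProduct

variable {ι : Type*} [Fintype ι]

theorem two_mul_mul_dotProduct_le (t : ℝ) (u v : ι → ℝ) :
    2 * t * (u ⬝ᵥ v) ≤ t ^ 2 * (u ⬝ᵥ u) + v ⬝ᵥ v := by
  simp only [dotProduct, Finset.mul_sum, ← Finset.sum_add_distrib]
  gcongr with i
  nlinarith [sq_nonneg (t * u i - v i)]

theorem add_add_dotProduct_self_le (p q r : ι → ℝ) :
    (p + q + r) ⬝ᵥ (p + q + r) ≤ 3 * (p ⬝ᵥ p + q ⬝ᵥ q + r ⬝ᵥ r) := by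
  simp only [dotProduct, Pi.add_apply, ← Finset.sum_add_distrib, Finset.mul_sum]
  exact Finset.sum_le_sum fun i _ => by
    nlinarith [sq_nonneg (p i - q i), sq_nonneg (p i - r i), sq_nonneg (q i - r i)]

theorem dotProduct_self_le_of_sq_le {κ : ℝ} {e w : ι → ℝ} (h : ∀ i, e i ^ 2 ≤ κ * w i ^ 2) :
    e ⬝ᵥ e ≤ κ * (w ⬝ᵥ w) := by
  simp only [dotProduct, Finset.mul_sum, ← sq]
  gcongr with i
  exact h i

end DotProduct

namespace Matrix

variable {ι κ : Type*} [Fintype ι] [Fintype κ]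

open scoped MatrixOrder in
theorem dotProduct_mulVec_le_of_spectralRadius_le_one [DecidableEq ι] {M : Matrix ι ι ℝ}
    (hM : M.IsHermitian) (h : spectralRadius ℝ M ≤ 1) (v : ι → ℝ) :
    v ⬝ᵥ (M *ᵥ v) ≤ v ⬝ᵥ v := by
  have hle : M ≤ 1 := (CFC.le_one_iff M hM.isSelfAdjoint).2 fun x hx => by
    have hx1 : (‖x‖₊ : ENNReal) ≤ 1 :=
      (le_iSup₂ (f := fun k (_ : k ∈ spectrum ℝ M) => (‖k‖₊ : ENNReal)) x hx).trans h
    exact (le_abs_self x).trans (by exact_mod_cast hx1)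
  simpa [sub_mulVec, dotProduct_sub] using (le_iff.mp hle).dotProduct_mulVec_nonneg v

theorem mulVec_dotProduct_self_le_of_spectralRadius_le_one [DecidableEq κ]
    {A : Matrix ι κ ℝ} (hρ : spectralRadius ℝ (Aᵀ * A) ≤ 1) (v : κ → ℝ) :
    (A *ᵥ v) ⬝ᵥ (A *ᵥ v) ≤ v ⬝ᵥ v := by
  have hH : (Aᵀ * A).IsHermitian := by
    simpa using isHermitian_conjTranspose_mul_self A
  simpa [← mulVec_mulVec, dotProduct_mulVec, vecMul_transpose] using
    dotProduct_mulVec_le_of_spectralRadius_le_one hH hρ v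

theorem transpose_mulVec_dotProduct_self_le {A : Matrix ι κ ℝ}
    (hA : ∀ v, (A *ᵥ v) ⬝ᵥ (A *ᵥ v) ≤ v ⬝ᵥ v) (y : ι → ℝ) :
    (Aᵀ *ᵥ y) ⬝ᵥ (Aᵀ *ᵥ y) ≤ y ⬝ᵥ y := by
  have hdual : (Aᵀ *ᵥ y) ⬝ᵥ (Aᵀ *ᵥ y) = y ⬝ᵥ (A *ᵥ (Aᵀ *ᵥ y)) := by
    rw [dotProduct_mulVec, ← mulVec_transpose, transpose_transpose, dotProduct_comm]
  have hyoung := two_mul_mul_dotProduct_le 1 y (A *ᵥ (Aᵀ *ᵥ y))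
  linarith [hA (Aᵀ *ᵥ y)]

end Matrix

section ISet

variable {ι : Type*} [Fintype ι] [DecidableEq ι] (S : Set ι)

theorem ISet_mulVec_eq_indicator (v : ι → ℝ) : ISet S *ᵥ v = S.indicator v := by
  ext i
  by_cases hi : i ∈ S <;> simp [ISet, mulVec_diagonal, hi]

theorem ISet_transpose : (ISet S)ᵀ = ISet S := diagonal_transpose _

theorem ISet_mul_self : ISet S * ISet S = ISet S := by
  simp [ISet, diagonal_mul_diagonal]

theorem dotProduct_ISet_mulVec_s14 (v w : ι → ℝ) : v ⬝ᵥ (ISet S *ᵥ w) = (ISet S *ᵥ v) ⬝ᵥ w := by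
  rw [dotProduct_mulVec, ← mulVec_transpose, ISet_transpose]

theorem dotProduct_ISet_mulVec_self (v : ι → ℝ) :
    v ⬝ᵥ (ISet S *ᵥ v) = (ISet S *ᵥ v) ⬝ᵥ (ISet S *ᵥ v) := by
  rw [← dotProduct_ISet_mulVec_s14, mulVec_mulVec, ISet_mul_self]

theorem ISet_mulVec_dotProduct_self_le (v : ι → ℝ) :
    (ISet S *ᵥ v) ⬝ᵥ (ISet S *ᵥ v) ≤ v ⬝ᵥ v := by
  rw [ISet_mulVec_eq_indicator]
  refine Finset.sum_le_sum fun i _ => ?_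
  by_cases hi : i ∈ S <;> simp [hi, mul_self_nonneg]

theorem ISet_mulVec_sub_ISet_mulVec_of_subset {S T : Set ι} (h : S ⊆ T) (v w : ι → ℝ) :
    ISet T *ᵥ v - ISet S *ᵥ w = ISet (T \ S) *ᵥ v + ISet S *ᵥ (v - w) := by
  ext i
  simp only [ISet_mulVec_eq_indicator, Pi.sub_apply, Pi.add_apply]
  by_cases hS : i ∈ S
  · simp [hS, h hS]
  · by_cases hT : i ∈ T <;> simp [hS, hT]

end ISet

theorem lyapunov_estimate_of_error_bounds {ι κ : Type*} [Fintype ι] [Fintype κ] [DecidableEq κ]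
    {A : Matrix ι κ ℝ} (hA : ∀ v, (A *ᵥ v) ⬝ᵥ (A *ᵥ v) ≤ v ⬝ᵥ v)
    {u w ex v₀ : κ → ℝ} {g ez ζ : ι → ℝ} {δ : ℝ}
    (hex : ex ⬝ᵥ ex ≤ 1 / 160 * (u ⬝ᵥ u)) (hez : ez ⬝ᵥ ez ≤ 1 / 160 * (g ⬝ᵥ g))
    (hδ : δ ≤ 1 / 120 * (u ⬝ᵥ u + g ⬝ᵥ g))
    (hw : w ⬝ᵥ w ≤ 2 * δ + 6 * (2 * (ex ⬝ᵥ ex) + ez ⬝ᵥ ez))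
    (hsad : v₀ ⬝ᵥ u + ζ ⬝ᵥ g ≤ -(1 / 2) * (g ⬝ᵥ g)) :
    (v₀ + ex) ⬝ᵥ u + (ζ + ez) ⬝ᵥ g - (u + w) ⬝ᵥ ((Aᵀ * A + 1) *ᵥ u)
      - (u + w) ⬝ᵥ (Aᵀ *ᵥ g) + (g + A *ᵥ ex) ⬝ᵥ (A *ᵥ u) ≤ -(1 / 8) * (u ⬝ᵥ u) := by
  simp only [add_mulVec, one_mulVec, ← mulVec_mulVec, dotProduct_add, add_dotProduct,
    dotProduct_mulVec _ Aᵀ, vecMul_transpose, mulVec_add, dotProduct_comm g]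
  -- Young's inequality on each cross term; the two instances pairing with `A u` absorb `-|A u|²`.
  have := two_mul_mul_dotProduct_le 12 ex u
  have := two_mul_mul_dotProduct_le 12 ez g
  have := two_mul_mul_dotProduct_le (-1) (A *ᵥ w) (A *ᵥ u)
  have := two_mul_mul_dotProduct_le 1 (A *ᵥ ex) (A *ᵥ u)
  have := two_mul_mul_dotProduct_le (-1) w u
  have := two_mul_mul_dotProduct_le (-3) (A *ᵥ w) g
  have hu : 0 ≤ u ⬝ᵥ u := Fintype.sum_nonneg fun i => mul_self_nonneg (u i)
  have hg : 0 ≤ g ⬝ᵥ g := Fintype.sum_nonneg fun i => mul_self_nonneg (g i)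
  linarith [hA w, hA ex]

section Lyapunov

variable {n m : ℕ} {A : Matrix (Fin m) (Fin n) ℝ} {b : Fin m → ℝ} {c : Fin n → ℝ}

theorem fmap_sub_fmap (x x' : Fin n → ℝ) (z z' : Fin m → ℝ) :
    fmap A b c x z - fmap A b c x' z' =
      -(Aᵀ *ᵥ (A *ᵥ (x - x')) + (x - x') + Aᵀ *ᵥ (z - z')) := by
  simp only [fmap, mulVec_sub]
  abel

theorem sub_dotProduct_fmap_add_eq {K : ℝ} {x xb : Fin n → ℝ} (z zb : Fin m → ℝ)
    (hx : ∀ i, 0 ≤ x i) (hxb : ∀ i, 0 ≤ xb i) (hAxb : A *ᵥ xb = b) :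
    (x - xb) ⬝ᵥ fmap A b c x z + (z - zb) ⬝ᵥ (A *ᵥ x - b) =
      -(LK A b c K x zb - LK A b c K xb zb)
        - (1 / 2) * ((x - xb) ⬝ᵥ (x - xb)) - (1 / 2) * ((A *ᵥ x - b) ⬝ᵥ (A *ᵥ x - b)) := by
  have hpen : ∀ y : Fin n → ℝ, (∀ i, 0 ≤ y i) → ∑ i, max 0 (-(y i)) = 0 := fun y hy =>
    Finset.sum_eq_zero fun i _ => max_eq_left (neg_nonpos.mpr (hy i))
  subst hAxb
  simp only [LK, fmap, hpen x hx, hpen xb hxb, sub_self, dotProduct_zero, mul_zero, add_zero,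
    ← mulVec_sub]
  simp only [dotProduct_add, dotProduct_sub, sub_dotProduct, dotProduct_neg,
    dotProduct_mulVec _ Aᵀ, vecMul_transpose, dotProduct_comm c, dotProduct_comm xb x,
    dotProduct_comm z, dotProduct_comm zb]
  ring

theorem sub_dotProduct_fmap_sub_ISet_sgm_nonneg {x xb : Fin n → ℝ} (z : Fin m → ℝ)
    (hx : ∀ i, 0 ≤ x i) (hxb : ∀ i, 0 ≤ xb i) :
    0 ≤ (x - xb) ⬝ᵥ (fmap A b c x z - ISet (sgm A b c x z) *ᵥ fmap A b c x z) := by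
  rw [ISet_mulVec_eq_indicator]
  refine Finset.sum_nonneg fun i _ => ?_
  by_cases hi : i ∈ sgm A b c x z
  · simp [hi]
  · have hi' : ¬(0 ≤ fmap A b c x z i ∨ 0 < x i) := hi
    push Not at hi'
    have hxi : x i = 0 := le_antisymm hi'.2 (hx i)
    simp only [Pi.sub_apply, Set.indicator_of_notMem hi, hxi, sub_zero, zero_sub]
    nlinarith [hxb i]

theorem sub_dotProduct_ISet_sgm_fmap_add_le {K : ℝ} {x xb : Fin n → ℝ} {z zb : Fin m → ℝ}
    (hmin : LK A b c K xb zb ≤ LK A b c K x zb)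
    (hx : ∀ i, 0 ≤ x i) (hxb : ∀ i, 0 ≤ xb i) (hAxb : A *ᵥ xb = b) :
    (x - xb) ⬝ᵥ (ISet (sgm A b c x z) *ᵥ fmap A b c x z) + (z - zb) ⬝ᵥ (A *ᵥ x - b)
      ≤ -(1 / 2) * ((A *ᵥ x - b) ⬝ᵥ (A *ᵥ x - b)) := by
  have hid := sub_dotProduct_fmap_add_eq (K := K) (c := c) z zb hx hxb hAxb
  have hsign := sub_dotProduct_fmap_sub_ISet_sgm_nonneg (A := A) (b := b) (c := c) z hx hxb
  have hsq : 0 ≤ (x - xb) ⬝ᵥ (x - xb) := Fintype.sum_nonneg fun i => mul_self_nonneg _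
  rw [dotProduct_sub] at hsign
  linarith

theorem ISet_sgm_fmap_sub_dotProduct_self_le (hA : ∀ v, (A *ᵥ v) ⬝ᵥ (A *ᵥ v) ≤ v ⬝ᵥ v)
    {x xh : Fin n → ℝ} {z zh : Fin m → ℝ} (hsub : sgm A b c xh zh ⊆ sgm A b c x z) :
    (ISet (sgm A b c x z) *ᵥ fmap A b c x z - ISet (sgm A b c xh zh) *ᵥ fmap A b c xh zh) ⬝ᵥ
        (ISet (sgm A b c x z) *ᵥ fmap A b c x z - ISet (sgm A b c xh zh) *ᵥ fmap A b c xh zh)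
      ≤ 2 * (fmap A b c x z ⬝ᵥ
          (ISet (sgm A b c x z \ sgm A b c xh zh) *ᵥ fmap A b c x z))
        + 6 * (2 * ((x - xh) ⬝ᵥ (x - xh)) + (z - zh) ⬝ᵥ (z - zh)) := by
  rw [ISet_mulVec_sub_ISet_mulVec_of_subset hsub, fmap_sub_fmap,
    dotProduct_ISet_mulVec_self (sgm A b c x z \ sgm A b c xh zh)]
  set d := ISet (sgm A b c x z \ sgm A b c xh zh) *ᵥ fmap A b c x z
  set q := ISet (sgm A b c xh zh) *ᵥ
    -(Aᵀ *ᵥ (A *ᵥ (x - xh)) + (x - xh) + Aᵀ *ᵥ (z - zh))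
  have hq : q ⬝ᵥ q ≤ 3 * ((Aᵀ *ᵥ (A *ᵥ (x - xh))) ⬝ᵥ (Aᵀ *ᵥ (A *ᵥ (x - xh)))
      + (x - xh) ⬝ᵥ (x - xh) + (Aᵀ *ᵥ (z - zh)) ⬝ᵥ (Aᵀ *ᵥ (z - zh))) := by
    refine (ISet_mulVec_dotProduct_self_le _ _).trans ?_
    rw [neg_dotProduct, dotProduct_neg, neg_neg]
    exact add_add_dotProduct_self_le _ _ _
  have hAtA := (transpose_mulVec_dotProduct_self_le hA (A *ᵥ (x - xh))).trans (hA (x - xh))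
  have hAt := transpose_mulVec_dotProduct_self_le hA (z - zh)
  have hyoung := two_mul_mul_dotProduct_le 1 d q
  simp only [add_dotProduct, dotProduct_add, dotProduct_comm q d] at hyoung ⊢
  linarith

end Lyapunov

theorem distributed_lyapunov_decrease_general (n m : ℕ) (c : Fin n → ℝ) (b : Fin m → ℝ)
    (A : Matrix (Fin m) (Fin n) ℝ)
    (hρ : spectralRadius ℝ (Aᵀ * A) ≤ 1)
    (xh : Fin n → ℝ) (zh : Fin m → ℝ) (K : ℝ)
    (hxh : ∀ i, 0 ≤ xh i)
    (xb : Fin n → ℝ) (zb : Fin m → ℝ)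
    (hsaddle : IsSaddle A b c K xb zb)
    (hAxb : A *ᵥ xb = b) (hxb : ∀ i, 0 ≤ xb i)
    (x : Fin n → ℝ) (z : Fin m → ℝ)
    -- (a) p̂ ⊆ p
    (hsub : sgm A b c xh zh ⊆ sgm A b c x z)
    -- (b) trigger bounds on e_x
    (μ : Fin n → ℝ) (hμ : ∀ i, 0 < μ i ∧ μ i ≤ 1 / 160)
    (hbx : ∀ i, (i ∈ sgm A b c xh zh →
        (x i - xh i) ^ 2 ≤ μ i * (fmap A b c xh zh i) ^ 2) ∧
      (i ∉ sgm A b c xh zh → x i - xh i = 0))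
    -- (c) trigger bounds on e_z
    (ν : Fin m → ℝ) (hν : ∀ ℓ, 0 < ν ℓ ∧ ν ℓ ≤ 1 / 160)
    (hbz : ∀ ℓ, (z ℓ - zh ℓ) ^ 2 ≤ ν ℓ * ((A *ᵥ xh - b) ℓ) ^ 2)
    -- (d) aggregated mode-mismatch bound
    (hd : fmap A b c x z ⬝ᵥ (ISet (sgm A b c x z \ sgm A b c xh zh) *ᵥ fmap A b c x z)
      ≤ (1 / 120) *
        (fmap A b c xh zh ⬝ᵥ (ISet (sgm A b c xh zh) *ᵥ fmap A b c xh zh)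
          + (A *ᵥ xh - b) ⬝ᵥ (A *ᵥ xh - b))) :
    (x - xb) ⬝ᵥ (ISet (sgm A b c xh zh) *ᵥ fmap A b c xh zh)
      + (z - zb) ⬝ᵥ (A *ᵥ xh - b)
      - fmap A b c x z ⬝ᵥ (ISet (sgm A b c x z) *ᵥ
          ((Aᵀ * A + 1) *ᵥ (ISet (sgm A b c xh zh) *ᵥ fmap A b c xh zh)))
      - fmap A b c x z ⬝ᵥ (ISet (sgm A b c x z) *ᵥ (Aᵀ *ᵥ (A *ᵥ xh - b)))
      + (A *ᵥ x - b) ⬝ᵥ (A *ᵥ (ISet (sgm A b c xh zh) *ᵥ fmap A b c xh zh))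
    ≤ -(1 / 8) * (fmap A b c xh zh ⬝ᵥ (ISet (sgm A b c xh zh) *ᵥ fmap A b c xh zh)) := by
  set u := ISet (sgm A b c xh zh) *ᵥ fmap A b c xh zh with hu
  set g := A *ᵥ xh - b with hg
  have hA := mulVec_dotProduct_self_le_of_spectralRadius_le_one hρ
  have hex : (x - xh) ⬝ᵥ (x - xh) ≤ 1 / 160 * (u ⬝ᵥ u) := by
    refine dotProduct_self_le_of_sq_le fun i => ?_
    rw [hu, ISet_mulVec_eq_indicator]
    by_cases hi : i ∈ sgm A b c xh zh
    · rw [Set.indicator_of_mem hi]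
      exact ((hbx i).1 hi).trans (by gcongr; exact (hμ i).2)
    · simp [Set.indicator_of_notMem hi, (hbx i).2 hi]
  have hez : (z - zh) ⬝ᵥ (z - zh) ≤ 1 / 160 * (g ⬝ᵥ g) :=
    dotProduct_self_le_of_sq_le fun ℓ => (hbz ℓ).trans (by gcongr; exact (hν ℓ).2)
  have hAx : A *ᵥ x - b = g + A *ᵥ (x - xh) := by rw [hg, mulVec_sub]; abel
  have huu : fmap A b c xh zh ⬝ᵥ u = u ⬝ᵥ u := dotProduct_ISet_mulVec_self _ _
  rw [huu] at hd ⊢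
  have hw := ISet_sgm_fmap_sub_dotProduct_self_le hA hsub
  have hsad := sub_dotProduct_ISet_sgm_fmap_add_le (z := zh) (hsaddle xh zb).2 hxh hxb hAxb
  have key := lyapunov_estimate_of_error_bounds hA hex hez hd hw hsad
  rwa [sub_add_sub_cancel', sub_add_sub_cancel', add_sub_cancel, ← hAx, ← dotProduct_ISet_mulVec_s14,
    ← dotProduct_ISet_mulVec_s14] at key

/-- Strict Lyapunov decrease for the distributed event-triggered design.
Under ρ(AᵀA) ≤ 1, the saddle-point assumptions, p̂ ⊆ p, inactivity of the distributed
triggers 𝒯_i^e with parameters 0 < μ_i ≤ 1/160 (hypotheses (b)-(c)), and the aggregated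
mode-mismatch bound (d), the Lie derivative of V is at most −⅛ f̂ᵀI_{p̂}f̂. -/
theorem distributed_lyapunov_decrease (n m : ℕ) (c : Fin n → ℝ) (b : Fin m → ℝ)
    (A : Matrix (Fin m) (Fin n) ℝ)
    (hρ : spectralRadius ℝ (Aᵀ * A) ≤ 1)
    (xh : Fin n → ℝ) (zh : Fin m → ℝ) (K : ℝ)
    (hxh : ∀ i, 0 ≤ xh i)
    (hK : ‖fmap A b c xh zh‖ ≤ K)
    (xb : Fin n → ℝ) (zb : Fin m → ℝ)
    (hsaddle : IsSaddle A b c K xb zb)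
    (hAxb : A *ᵥ xb = b) (hxb : ∀ i, 0 ≤ xb i)
    (x : Fin n → ℝ) (z : Fin m → ℝ)
    -- (a) p̂ ⊆ p
    (hsub : sgm A b c xh zh ⊆ sgm A b c x z)
    -- (b) trigger bounds on e_x
    (μ : Fin n → ℝ) (hμ : ∀ i, 0 < μ i ∧ μ i ≤ 1 / 160)
    (hbx : ∀ i, (i ∈ sgm A b c xh zh →
        (x i - xh i) ^ 2 ≤ μ i * (fmap A b c xh zh i) ^ 2) ∧
      (i ∉ sgm A b c xh zh → x i - xh i = 0))
    -- (c) trigger bounds on e_z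
    (ν : Fin m → ℝ) (hν : ∀ ℓ, 0 < ν ℓ ∧ ν ℓ ≤ 1 / 160)
    (hbz : ∀ ℓ, (z ℓ - zh ℓ) ^ 2 ≤ ν ℓ * ((A *ᵥ xh - b) ℓ) ^ 2)
    -- (d) aggregated mode-mismatch bound
    (hd : fmap A b c x z ⬝ᵥ (ISet (sgm A b c x z \ sgm A b c xh zh) *ᵥ fmap A b c x z)
      ≤ (1 / 120) *
        (fmap A b c xh zh ⬝ᵥ (ISet (sgm A b c xh zh) *ᵥ fmap A b c xh zh)
          + (A *ᵥ xh - b) ⬝ᵥ (A *ᵥ xh - b))) :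
    (x - xb) ⬝ᵥ (ISet (sgm A b c xh zh) *ᵥ fmap A b c xh zh)
      + (z - zb) ⬝ᵥ (A *ᵥ xh - b)
      - fmap A b c x z ⬝ᵥ (ISet (sgm A b c x z) *ᵥ
          ((Aᵀ * A + 1) *ᵥ (ISet (sgm A b c xh zh) *ᵥ fmap A b c xh zh)))
      - fmap A b c x z ⬝ᵥ (ISet (sgm A b c x z) *ᵥ (Aᵀ *ᵥ (A *ᵥ xh - b)))
      + (A *ᵥ x - b) ⬝ᵥ (A *ᵥ (ISet (sgm A b c xh zh) *ᵥ fmap A b c xh zh))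
    ≤ -(1 / 8) * (fmap A b c xh zh ⬝ᵥ (ISet (sgm A b c xh zh) *ᵥ fmap A b c xh zh)) :=
  distributed_lyapunov_decrease_general n m c b A hρ xh zh K hxh xb zb hsaddle hAxb hxb x z hsub μ
    hμ hbx ν hν hbz hd
end
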